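/- arXiv:1507.02089 — 6 statements merged into one kernel-verified Lean document; each statement's English description precedes it below -/
import Mathlib

section
/- Let Δ ∈ ℕ and k ≥ 2. There exists a constant β > 0.35 such that for every k-color edge-coloring model h : ℕ^k → ℂ satisfying |h(α) − 1| ≤ β/(Δ+1) for all α ∈ ℕ^k with |α| ≤ Δ, and every finite simple graph G of maximum degree at most Δ, the partition function satisfies p(G)(h) ≠ 0. -/
noncomputable section

variable {V : Type} [Fintype V] [DecidableEq V]

/-- `colorVec G φ v j` = number of edges incident with `v` that `φ` colors `j`,
so `colorVec G φ v = φ(δ(v)) ∈ ℕ^k`. -/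
def colorVec {k : ℕ} (G : SimpleGraph V) (φ : G.edgeSet → Fin k) (v : V) : Fin k → ℕ :=
  fun j => Nat.card {e : G.edgeSet // v ∈ (e : Sym2 V) ∧ φ e = j}

/-- Partition function of a `k`-color edge-coloring model `h`:
`p(G)(h) = Σ_{φ : E → [k]} Π_{v ∈ V} h(φ(δ(v)))`. -/
def pf (k : ℕ) (G : SimpleGraph V) (h : (Fin k → ℕ) → ℂ) : ℂ :=
  ∑ᶠ φ : G.edgeSet → Fin k, ∏ v : V, h (colorVec G φ v)

/-- Degree of a vertex. -/
def deg (G : SimpleGraph V) (v : V) : ℕ := Nat.card (G.neighborSet v)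

/-- Maximum degree Δ(G). -/
def maxDeg (G : SimpleGraph V) : ℕ := Finset.univ.sup (deg G)


end


/-!
Pin extra half-edges at the vertices: for an edge set `E` and pins `c : W → ℕᵏ` let
`Q_E(c) = Σ_φ Π_v h(c v + φ(δ_E(v)))`. Deleting an edge `xy` gives
`k · Q_E(c) = Σ_i Q_{E-xy}(c + eᵢ at x + eᵢ at y)`. By induction on `|E|`, for every `c` within
the degree bound, `Q_E(c) ≠ 0`, and recolouring one pinned half-edge at `u` changes `Q_E(c)` by a
factor within `δ(deg_E u)` of `1`. In the deletion formula the `k` summands then differ pairwise by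
two such factors, so for `δ ≤ a` they lie in a sector of half-angle `2 arcsin a` and cannot cancel:
`|Σ qᵢ| ≥ (1 - 2a²) Σ |qᵢ|`. This keeps `Q_E(c)` nonzero and carries the recolouring bound from
`E - xy` to `E` as long as `δ(d) ≤ (1 - 2a²) δ(d + 1)`. At an isolated vertex the bound is
`2ε/(1 - ε)` with `ε = β/(Δ+1)`, and a geometric sequence `δ` ending at `a = 1.2/(Δ+1)`
accommodates `β = 0.351`.
-/

open Finset

namespace Complex

/-- The disk of radius `a ≤ 1` around `1` lies in the sector `|arg z| ≤ arcsin a`. -/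
lemma abs_im_le_and_le_re {z : ℂ} {a : ℝ} (ha : a ≤ 1) (hz : ‖z - 1‖ ≤ a) :
    |z.im| ≤ a * ‖z‖ ∧ √(1 - a ^ 2) * ‖z‖ ≤ z.re := by
  have ha₀ : 0 ≤ a := (norm_nonneg _).trans hz
  have hdisk : (z.re - 1) ^ 2 + z.im ^ 2 ≤ a ^ 2 := by
    have := pow_le_pow_left₀ (norm_nonneg _) hz 2
    rwa [Complex.sq_norm, normSq_apply, sub_re, one_re, sub_im, one_im, sub_zero, ← sq, ← sq]
      at this
  have hnorm : ‖z‖ ^ 2 = z.re ^ 2 + z.im ^ 2 := by rw [Complex.sq_norm, normSq_apply]; ring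
  have ha₂ : 0 ≤ 1 - a ^ 2 := sub_nonneg.2 (pow_le_one₀ ha₀ ha)
  -- on the disk, `a² re² - (1 - a²) im² ≥ (re - (1 - a²))²`
  have hsector : (1 - a ^ 2) * z.im ^ 2 ≤ a ^ 2 * z.re ^ 2 := by
    nlinarith [sq_nonneg (z.re - (1 - a ^ 2)), mul_nonneg ha₂ (sub_nonneg.2 hdisk)]
  have hre : 0 ≤ z.re := by nlinarith [sq_nonneg z.im]
  constructor
  · exact abs_le_of_sq_le_sq (by rw [mul_pow, hnorm]; linarith) (by positivity)
  · rw [← Real.sqrt_sq (norm_nonneg z), ← Real.sqrt_mul ha₂, Real.sqrt_le_left hre, hnorm]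
    linarith

/-- `cos (2 arcsin a) = 1 - 2a²`. -/
lemma one_sub_two_mul_sq_mul_norm_le_re_mul {w₁ w₂ : ℂ} {a : ℝ} (ha : a ≤ 1)
    (h₁ : ‖w₁ - 1‖ ≤ a) (h₂ : ‖w₂ - 1‖ ≤ a) :
    (1 - 2 * a ^ 2) * ‖w₁ * w₂‖ ≤ (w₁ * w₂).re := by
  obtain ⟨him₁, hre₁⟩ := abs_im_le_and_le_re ha h₁
  obtain ⟨him₂, hre₂⟩ := abs_im_le_and_le_re ha h₂
  have ha₀ : 0 ≤ a := (norm_nonneg _).trans h₁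
  have hre := mul_le_mul hre₁ hre₂ (by positivity) ((by positivity : (0 : ℝ) ≤ _).trans hre₁)
  rw [mul_mul_mul_comm, Real.mul_self_sqrt (sub_nonneg.2 (pow_le_one₀ ha₀ ha))] at hre
  have him : w₁.im * w₂.im ≤ (a * ‖w₁‖) * (a * ‖w₂‖) :=
    (le_abs_self _).trans ((abs_mul _ _).trans_le
      (mul_le_mul him₁ him₂ (abs_nonneg _) (by positivity)))
  rw [norm_mul, mul_re]
  linear_combination hre + him

lemma mul_sum_norm_le_norm_sum {ι : Type*} (s : Finset ι) (p : ι → ℂ) {c : ℝ}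
    (hp : ∀ i ∈ s, c * ‖p i‖ ≤ (p i).re) : c * ∑ i ∈ s, ‖p i‖ ≤ ‖∑ i ∈ s, p i‖ :=
  calc c * ∑ i ∈ s, ‖p i‖ ≤ ∑ i ∈ s, (p i).re := by rw [mul_sum]; exact sum_le_sum hp
    _ = (∑ i ∈ s, p i).re := (re_sum _ _).symm
    _ ≤ ‖∑ i ∈ s, p i‖ := re_le_norm _

lemma exists_eq_mul_of_norm_sub_le {X Y : ℂ} {d : ℝ} (hY : Y ≠ 0) (h : ‖X - Y‖ ≤ d * ‖Y‖) :
    ∃ w, ‖w - 1‖ ≤ d ∧ X = Y * w :=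
  ⟨X / Y, by rwa [div_sub_one hY, norm_div, div_le_iff₀ (norm_pos_iff.2 hY)],
    (mul_div_cancel₀ X hY).symm⟩

lemma norm_sub_le_mul_norm_of_norm_sub_one_le {z₁ z₂ : ℂ} {ε δ : ℝ} (h₁ : ‖z₁ - 1‖ ≤ ε)
    (h₂ : ‖z₂ - 1‖ ≤ ε) (hεδ : 2 * ε ≤ (1 - ε) * δ) (hδ : 0 ≤ δ) : ‖z₁ - z₂‖ ≤ δ * ‖z₂‖ := by
  have hz₂ : 1 - ε ≤ ‖z₂‖ := by
    have := norm_sub_norm_le (1 : ℂ) (1 - z₂)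
    rw [sub_sub_cancel, norm_one, norm_sub_rev] at this
    linarith
  calc ‖z₁ - z₂‖ = ‖(z₁ - 1) - (z₂ - 1)‖ := by ring_nf
    _ ≤ ε + ε := (norm_sub_le _ _).trans (add_le_add h₁ h₂)
    _ ≤ δ * ‖z₂‖ := by nlinarith

end Complex

lemma Finset.card_filter_eq_card_filter_erase_add {α : Type*} [DecidableEq α] {s : Finset α}
    {a : α} (ha : a ∈ s) (p : α → Prop) [DecidablePred p] :
    #{x ∈ s | p x} = #{x ∈ s.erase a | p x} + if p a then 1 else 0 := by
  simp only [card_filter]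
  exact (sum_erase_add _ _ ha).symm

theorem Fintype.card_nsmul_sum_eq_sum_sum_of_update_eq {α β M : Type*} [Fintype α]
    [DecidableEq α] [Fintype β] [AddCommMonoid M] (a : α)
    (F : (α → β) → β → M) (hF : ∀ φ t s, F (Function.update φ a t) s = F φ s) :
    Fintype.card β • ∑ φ, F φ (φ a) = ∑ s, ∑ φ, F φ s := by
  -- `(φ, s) ↦ (φ[a ↦ s], φ a)` is an involution of `(α → β) × β`
  let σ : Equiv.Perm ((α → β) × β) := Function.Involutive.toPerm
    (fun p => (Function.update p.1 a p.2, p.1 a)) fun p => by simp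
  calc Fintype.card β • ∑ φ, F φ (φ a) = ∑ p : (α → β) × β, F p.1 (p.1 a) := by
        simp [Fintype.sum_prod_type, smul_sum]
    _ = ∑ p, F (σ p).1 ((σ p).1 a) := (Equiv.sum_comp σ _).symm
    _ = ∑ p : (α → β) × β, F p.1 p.2 := Fintype.sum_congr _ _ fun p => by
        change F (Function.update p.1 a p.2) (Function.update p.1 a p.2 a) = _
        rw [Function.update_self, hF]
    _ = ∑ s, ∑ φ, F φ s := by rw [Fintype.sum_prod_type, sum_comm]

namespace EdgeColoringModel

section PinnedPartitionFunction

variable {W : Type*} [DecidableEq W] {k : ℕ}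

def edgeDegree (E : Finset (Sym2 W)) (v : W) : ℕ := #{e ∈ E | v ∈ e}

def colorCount (E : Finset (Sym2 W)) (φ : Sym2 W → Fin k) (v : W) : Fin k → ℕ :=
  fun j => #{e ∈ E | v ∈ e ∧ φ e = j}

/-- `c v j` extra half-edges of colour `j` are pinned at `v`. The colourings run over all of
`Sym2 W`; the colours off `E` only contribute a factor `k ^ #(Sym2 W \ E)`. -/
def pinnedPF [Fintype W] (h : (Fin k → ℕ) → ℂ) (E : Finset (Sym2 W)) (c : W → Fin k → ℕ) : ℂ :=
  ∑ φ : Sym2 W → Fin k, ∏ v, h (c v + colorCount E φ v)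

def halfEdge (u : W) (i : Fin k) : W → Fin k → ℕ := Pi.single u (Pi.single i 1)

/-- `|α|` for every argument `α` of `h` at `v` in `pinnedPF h E c`. -/
def totalDegree (E : Finset (Sym2 W)) (c : W → Fin k → ℕ) (v : W) : ℕ :=
  edgeDegree E v + ∑ j, c v j

lemma edgeDegree_eq_zero_iff {E : Finset (Sym2 W)} {v : W} :
    edgeDegree E v = 0 ↔ ∀ e ∈ E, v ∉ e := by
  simp [edgeDegree, filter_eq_empty_iff]

lemma edgeDegree_eq_erase_add {E : Finset (Sym2 W)} {x y : W} (hxy : x ≠ y) (hE : s(x, y) ∈ E)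
    (v : W) :
    edgeDegree E v = edgeDegree (E.erase s(x, y)) v + (if v = x then 1 else 0) +
      (if v = y then 1 else 0) := by
  simp only [edgeDegree, card_filter_eq_card_filter_erase_add hE, Sym2.mem_iff]
  by_cases hvx : v = x <;> by_cases hvy : v = y <;> simp_all

lemma colorCount_eq_erase_add {E : Finset (Sym2 W)} {x y : W} (hxy : x ≠ y) (hE : s(x, y) ∈ E)
    (φ : Sym2 W → Fin k) (v : W) :
    colorCount E φ v = colorCount (E.erase s(x, y)) φ v + halfEdge x (φ s(x, y)) v +
      halfEdge y (φ s(x, y)) v := by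
  ext j
  simp only [colorCount, halfEdge, Pi.add_apply, card_filter_eq_card_filter_erase_add hE,
    Sym2.mem_iff, Pi.single_apply]
  by_cases hvx : v = x <;> by_cases hvy : v = y <;> by_cases hj : j = φ s(x, y) <;>
    simp_all [eq_comm]

lemma totalDegree_add_halfEdge (E : Finset (Sym2 W)) (c : W → Fin k → ℕ) (u : W) (i : Fin k)
    (v : W) :
    totalDegree E (c + halfEdge u i) v = totalDegree E c v + if v = u then 1 else 0 := by
  by_cases hv : v = u <;> simp [totalDegree, sum_add_distrib, halfEdge, hv, add_assoc]

lemma totalDegree_erase_add_halfEdge {E : Finset (Sym2 W)} {x y : W} (hxy : x ≠ y)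
    (hE : s(x, y) ∈ E) (c : W → Fin k → ℕ) (i j : Fin k) :
    totalDegree (E.erase s(x, y)) (c + halfEdge x i + halfEdge y j) = totalDegree E c := by
  ext v
  rw [totalDegree_add_halfEdge, totalDegree_add_halfEdge, totalDegree, totalDegree,
    edgeDegree_eq_erase_add hxy hE v]
  ring

variable [Fintype W] (h : (Fin k → ℕ) → ℂ)

lemma natCast_mul_pinnedPF {E : Finset (Sym2 W)} {x y : W} (hxy : x ≠ y) (hE : s(x, y) ∈ E)
    (c : W → Fin k → ℕ) :
    (k : ℂ) * pinnedPF h E c =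
      ∑ i, pinnedPF h (E.erase s(x, y)) (c + halfEdge x i + halfEdge y i) := by
  have hcount : ∀ (φ : Sym2 W → Fin k) t,
      colorCount (E.erase s(x, y)) (Function.update φ s(x, y) t) =
        colorCount (E.erase s(x, y)) φ := fun φ t => by
    ext v j
    refine congrArg card (filter_congr fun e he => ?_)
    rw [Function.update_of_ne (ne_of_mem_erase he)]
  have key := Fintype.card_nsmul_sum_eq_sum_sum_of_update_eq s(x, y)
    (fun φ i => ∏ v, h ((c + halfEdge x i + halfEdge y i) v + colorCount (E.erase s(x, y)) φ v))
    (fun φ t s => by simp only [hcount])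
  rw [Fintype.card_fin, nsmul_eq_mul] at key
  simp only [pinnedPF, ← key]
  congr 2 with φ
  refine prod_congr rfl fun v _ => ?_
  rw [colorCount_eq_erase_add hxy hE, Pi.add_apply, Pi.add_apply]
  abel_nf

lemma exists_pinnedPF_add_halfEdge_eq_mul {E : Finset (Sym2 W)} {u : W}
    (hu : edgeDegree E u = 0) (c : W → Fin k → ℕ) :
    ∃ R : ℂ, ∀ i, pinnedPF h E (c + halfEdge u i) = h (c u + Pi.single i 1) * R := by
  have hcount : ∀ φ : Sym2 W → Fin k, colorCount E φ u = 0 := fun φ => by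
    ext j
    exact card_eq_zero.2 (filter_eq_empty_iff.2 fun e he hue =>
      edgeDegree_eq_zero_iff.1 hu e he hue.1)
  refine ⟨∑ φ, ∏ v ∈ univ.erase u, h (c v + colorCount E φ v), fun i => ?_⟩
  rw [pinnedPF, mul_sum]
  refine sum_congr rfl fun φ _ => ?_
  rw [← mul_prod_erase univ _ (mem_univ u)]
  congr 1
  · simp [halfEdge, hcount]
  · refine prod_congr rfl fun v hv => ?_
    simp [halfEdge, ne_of_mem_erase hv]

lemma pinnedPF_empty (c : W → Fin k → ℕ) :
    pinnedPF h ∅ c = (k : ℂ) ^ Fintype.card (Sym2 W) * ∏ v, h (c v) := by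
  have hcount : ∀ φ : Sym2 W → Fin k, colorCount ∅ φ = 0 := fun φ => by
    ext v j
    simp [colorCount]
  simp [pinnedPF, hcount]

end PinnedPartitionFunction

section Induction

variable {W : Type*} [DecidableEq W] [Fintype W] {k : ℕ}

def PinnedBounds (h : (Fin k → ℕ) → ℂ) (Δ : ℕ) (δ : ℕ → ℝ) (E : Finset (Sym2 W)) : Prop :=
  ∀ c : W → Fin k → ℕ, (∀ v, totalDegree E c v ≤ Δ) →
    pinnedPF h E c ≠ 0 ∧
    ∀ u, totalDegree E c u < Δ → ∀ i₁ i₂ : Fin k,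
      ‖pinnedPF h E (c + halfEdge u i₁) - pinnedPF h E (c + halfEdge u i₂)‖ ≤
        δ (edgeDegree E u) * ‖pinnedPF h E (c + halfEdge u i₂)‖

structure DecaySequence (Δ : ℕ) (δ : ℕ → ℝ) (ε a : ℝ) : Prop where
  two_mul_sq_lt_one : 2 * a ^ 2 < 1
  nonneg : ∀ d, 0 ≤ δ d
  le : ∀ d, δ d ≤ a
  le_mul_succ : ∀ d, d + 2 ≤ Δ → δ d ≤ (1 - 2 * a ^ 2) * δ (d + 1)
  two_mul_le : 1 ≤ Δ → 2 * ε ≤ (1 - ε) * δ 0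

variable {h : (Fin k → ℕ) → ℂ} {Δ : ℕ} {δ : ℕ → ℝ} {E : Finset (Sym2 W)} {ε a : ℝ}

lemma PinnedBounds.exists_eq_mul (hE : PinnedBounds h Δ δ E) {c : W → Fin k → ℕ} {u : W}
    {j : Fin k} (hc : ∀ v, totalDegree E (c + halfEdge u j) v ≤ Δ) (i : Fin k) :
    pinnedPF h E (c + halfEdge u j) ≠ 0 ∧ ∃ w, ‖w - 1‖ ≤ δ (edgeDegree E u) ∧
      pinnedPF h E (c + halfEdge u i) = pinnedPF h E (c + halfEdge u j) * w := by
  have hc' : ∀ v, totalDegree E c v ≤ Δ := fun v =>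
    (Nat.le_add_right _ _).trans ((totalDegree_add_halfEdge E c u j v).symm.le.trans (hc v))
  have hu : totalDegree E c u < Δ := by
    have := hc u
    rw [totalDegree_add_halfEdge, if_pos rfl] at this
    omega
  have hne := (hE _ hc).1
  exact ⟨hne, Complex.exists_eq_mul_of_norm_sub_le hne ((hE c hc').2 u hu i j)⟩

lemma norm_sub_le_of_edgeDegree_eq_zero (hh : ∀ α : Fin k → ℕ, ∑ j, α j ≤ Δ → ‖h α - 1‖ ≤ ε)
    {δ₀ : ℝ} (hεδ : 2 * ε ≤ (1 - ε) * δ₀) (hδ₀ : 0 ≤ δ₀) {u : W} (hu₀ : edgeDegree E u = 0)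
    {c : W → Fin k → ℕ} (hu : totalDegree E c u < Δ) (i₁ i₂ : Fin k) :
    ‖pinnedPF h E (c + halfEdge u i₁) - pinnedPF h E (c + halfEdge u i₂)‖ ≤
      δ₀ * ‖pinnedPF h E (c + halfEdge u i₂)‖ := by
  obtain ⟨R, hR⟩ := exists_pinnedPF_add_halfEdge_eq_mul h hu₀ c
  have hα : ∀ i, ∑ j, (c u + Pi.single i 1 : Fin k → ℕ) j ≤ Δ := fun i => by
    simp only [Pi.add_apply, sum_add_distrib, sum_pi_single', if_pos (mem_univ i)]
    unfold totalDegree at hu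
    omega
  rw [hR, hR, ← sub_mul, norm_mul, norm_mul, ← mul_assoc]
  exact mul_le_mul_of_nonneg_right
    (Complex.norm_sub_le_mul_norm_of_norm_sub_one_le (hh _ (hα i₁)) (hh _ (hα i₂)) hεδ hδ₀)
    (norm_nonneg R)

variable [NeZero k]

lemma pinnedPF_empty_ne_zero (hh : ∀ α : Fin k → ℕ, ∑ j, α j ≤ Δ → ‖h α - 1‖ ≤ ε) (hε : ε < 1)
    {c : W → Fin k → ℕ} (hc : ∀ v, totalDegree ∅ c v ≤ Δ) : pinnedPF h ∅ c ≠ 0 := by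
  rw [pinnedPF_empty]
  refine mul_ne_zero (pow_ne_zero _ (Nat.cast_ne_zero.2 (NeZero.ne k)))
    (prod_ne_zero_iff.2 fun v _ hv => ?_)
  have := hh (c v) (by simpa [totalDegree, edgeDegree] using hc v)
  rw [hv, zero_sub, norm_neg, norm_one] at this
  linarith

lemma PinnedBounds.mul_sum_norm_le_norm_sum {x y : W} (hxy : x ≠ y) (hxyE : s(x, y) ∈ E)
    (hE : PinnedBounds h Δ δ (E.erase s(x, y))) (ha : a ≤ 1) (hδa : ∀ d, δ d ≤ a)
    {c : W → Fin k → ℕ} (hc : ∀ v, totalDegree E c v ≤ Δ) :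
    pinnedPF h (E.erase s(x, y)) (c + halfEdge x 0 + halfEdge y 0) ≠ 0 ∧
    (1 - 2 * a ^ 2) * ∑ i, ‖pinnedPF h (E.erase s(x, y)) (c + halfEdge x i + halfEdge y i)‖ ≤
      ‖∑ i, pinnedPF h (E.erase s(x, y)) (c + halfEdge x i + halfEdge y i)‖ := by
  have hc' := totalDegree_erase_add_halfEdge hxy hxyE c
  have hc₀ : ∀ v, totalDegree (E.erase s(x, y)) (c + halfEdge x 0 + halfEdge y 0) v ≤ Δ :=
    fun v => (congrFun (hc' 0 0) v).le.trans (hc v)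
  have hratio : ∀ i, ∃ w₁ w₂ : ℂ, ‖w₁ - 1‖ ≤ a ∧ ‖w₂ - 1‖ ≤ a ∧
      pinnedPF h (E.erase s(x, y)) (c + halfEdge x i + halfEdge y i) =
        pinnedPF h (E.erase s(x, y)) (c + halfEdge x 0 + halfEdge y 0) * (w₁ * w₂) := by
    intro i
    -- recolour the half-edge at `y`, then the one at `x`
    obtain ⟨-, w₁, hw₁, hQ₁⟩ := hE.exists_eq_mul hc₀ i
    obtain ⟨-, w₂, hw₂, hQ₂⟩ := hE.exists_eq_mul (u := x) (c := c + halfEdge y i) (j := 0)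
      (fun v => by rw [add_right_comm, hc']; exact hc v) i
    rw [add_right_comm c (halfEdge x i), hQ₂, add_right_comm c (halfEdge y i), hQ₁, mul_assoc]
    exact ⟨w₁, w₂, hw₁.trans (hδa _), hw₂.trans (hδa _), rfl⟩
  choose w₁ w₂ hw₁ hw₂ hQ using hratio
  refine ⟨(hE.exists_eq_mul hc₀ 0).1, ?_⟩
  have hcone := Complex.mul_sum_norm_le_norm_sum univ (fun i => w₁ i * w₂ i)
    fun i _ => Complex.one_sub_two_mul_sq_mul_norm_le_re_mul ha (hw₁ i) (hw₂ i)
  set r := pinnedPF h (E.erase s(x, y)) (c + halfEdge x 0 + halfEdge y 0)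
  calc (1 - 2 * a ^ 2) * ∑ i, ‖pinnedPF h (E.erase s(x, y)) (c + halfEdge x i + halfEdge y i)‖
      = ‖r‖ * ((1 - 2 * a ^ 2) * ∑ i, ‖w₁ i * w₂ i‖) := by
        simp_rw [hQ, norm_mul r, ← mul_sum]
        ring
    _ ≤ ‖r‖ * ‖∑ i, w₁ i * w₂ i‖ := mul_le_mul_of_nonneg_left hcone (norm_nonneg r)
    _ = ‖∑ i, pinnedPF h (E.erase s(x, y)) (c + halfEdge x i + halfEdge y i)‖ := by
        simp_rw [hQ, ← mul_sum, norm_mul]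

lemma PinnedBounds.pinnedPF_ne_zero {x y : W} (hxy : x ≠ y) (hxyE : s(x, y) ∈ E)
    (hE : PinnedBounds h Δ δ (E.erase s(x, y))) (ha : 2 * a ^ 2 < 1) (hδa : ∀ d, δ d ≤ a)
    {c : W → Fin k → ℕ} (hc : ∀ v, totalDegree E c v ≤ Δ) : pinnedPF h E c ≠ 0 := by
  obtain ⟨hne, hcone⟩ := hE.mul_sum_norm_le_norm_sum hxy hxyE (by nlinarith) hδa hc
  have hpos := (norm_pos_iff.2 hne).trans_le (single_le_sum
    (f := fun i => ‖pinnedPF h (E.erase s(x, y)) (c + halfEdge x i + halfEdge y i)‖)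
    (fun i _ => norm_nonneg _) (mem_univ 0))
  have : (k : ℂ) * pinnedPF h E c ≠ 0 := by
    rw [natCast_mul_pinnedPF h hxy hxyE, ← norm_pos_iff]
    exact (mul_pos (by linarith) hpos).trans_le hcone
  exact right_ne_zero_of_mul this

lemma PinnedBounds.norm_sub_le {u y : W} (huy : u ≠ y) (huyE : s(u, y) ∈ E)
    (hE : PinnedBounds h Δ δ (E.erase s(u, y))) (ha : a ≤ 1) (hδ₀ : ∀ d, 0 ≤ δ d)
    (hδa : ∀ d, δ d ≤ a) (hδ : ∀ d, d + 2 ≤ Δ → δ d ≤ (1 - 2 * a ^ 2) * δ (d + 1))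
    {c : W → Fin k → ℕ} (hc : ∀ v, totalDegree E c v ≤ Δ) (hu : totalDegree E c u < Δ)
    (i₁ i₂ : Fin k) :
    ‖pinnedPF h E (c + halfEdge u i₁) - pinnedPF h E (c + halfEdge u i₂)‖ ≤
      δ (edgeDegree E u) * ‖pinnedPF h E (c + halfEdge u i₂)‖ := by
  set Q := pinnedPF h (E.erase s(u, y))
  have hcB : ∀ v, totalDegree E (c + halfEdge u i₂) v ≤ Δ := fun v => by
    rw [totalDegree_add_halfEdge]
    split_ifs with hv
    · exact hv ▸ hu
    · exact hc v
  obtain ⟨-, hcone⟩ := hE.mul_sum_norm_le_norm_sum huy huyE ha hδa hcB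
  have hdiff : ∀ i, ‖Q (c + halfEdge u i₁ + halfEdge u i + halfEdge y i) -
      Q (c + halfEdge u i₂ + halfEdge u i + halfEdge y i)‖ ≤ δ (edgeDegree (E.erase s(u, y)) u) *
        ‖Q (c + halfEdge u i₂ + halfEdge u i + halfEdge y i)‖ := by
    intro i
    have hc' := totalDegree_erase_add_halfEdge huy huyE c i i
    have hswap : ∀ j, c + halfEdge u j + halfEdge u i + halfEdge y i =
        c + halfEdge u i + halfEdge y i + halfEdge u j := fun j => by abel
    rw [hswap, hswap]
    exact (hE _ fun v => (congrFun hc' v).le.trans (hc v)).2 u ((congrFun hc' u).trans_lt hu)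
      i₁ i₂
  have hdeg : δ (edgeDegree (E.erase s(u, y)) u) ≤ (1 - 2 * a ^ 2) * δ (edgeDegree E u) := by
    have hdeg := edgeDegree_eq_erase_add huy huyE u
    rw [if_pos rfl, if_neg huy, add_zero] at hdeg
    rw [hdeg]
    exact hδ _ (by unfold totalDegree at hu; omega)
  refine le_of_mul_le_mul_left ?_ (Nat.cast_pos.2 (Nat.pos_of_neZero k) : (0 : ℝ) < k)
  calc (k : ℝ) * ‖pinnedPF h E (c + halfEdge u i₁) - pinnedPF h E (c + halfEdge u i₂)‖
      = ‖∑ i, (Q (c + halfEdge u i₁ + halfEdge u i + halfEdge y i) -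
          Q (c + halfEdge u i₂ + halfEdge u i + halfEdge y i))‖ := by
        rw [sum_sub_distrib, ← natCast_mul_pinnedPF h huy huyE,
          ← natCast_mul_pinnedPF h huy huyE, ← mul_sub, norm_mul, Complex.norm_natCast]
    _ ≤ ∑ i, δ (edgeDegree (E.erase s(u, y)) u) *
          ‖Q (c + halfEdge u i₂ + halfEdge u i + halfEdge y i)‖ :=
        (norm_sum_le _ _).trans (sum_le_sum fun i _ => hdiff i)
    _ ≤ (1 - 2 * a ^ 2) * δ (edgeDegree E u) *
          ∑ i, ‖Q (c + halfEdge u i₂ + halfEdge u i + halfEdge y i)‖ := by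
        rw [← mul_sum]
        exact mul_le_mul_of_nonneg_right hdeg (sum_nonneg fun i _ => norm_nonneg _)
    _ = δ (edgeDegree E u) *
          ((1 - 2 * a ^ 2) * ∑ i, ‖Q (c + halfEdge u i₂ + halfEdge u i + halfEdge y i)‖) := by
        ring
    _ ≤ δ (edgeDegree E u) * ‖∑ i, Q (c + halfEdge u i₂ + halfEdge u i + halfEdge y i)‖ :=
        mul_le_mul_of_nonneg_left hcone (hδ₀ _)
    _ = (k : ℝ) * (δ (edgeDegree E u) * ‖pinnedPF h E (c + halfEdge u i₂)‖) := by
        rw [← natCast_mul_pinnedPF h huy huyE, norm_mul, Complex.norm_natCast]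
        ring

theorem pinnedBounds (hh : ∀ α : Fin k → ℕ, ∑ j, α j ≤ Δ → ‖h α - 1‖ ≤ ε) (hε : ε < 1)
    (hδ : DecaySequence Δ δ ε a) (hE : ∀ e ∈ E, ¬e.IsDiag) : PinnedBounds h Δ δ E := by
  induction E using Finset.strongInduction with
  | H E ih =>
  have hIH : ∀ x y, s(x, y) ∈ E → x ≠ y ∧ PinnedBounds h Δ δ (E.erase s(x, y)) :=
    fun x y hf => ⟨fun hxy => hE _ hf (Sym2.mk_isDiag_iff.2 hxy),
      ih _ (erase_ssubset hf) fun e he => hE e (mem_of_mem_erase he)⟩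
  intro c hc
  refine ⟨?_, fun u hu i₁ i₂ => ?_⟩
  · rcases E.eq_empty_or_nonempty with rfl | ⟨f, hf⟩
    · exact pinnedPF_empty_ne_zero hh hε hc
    · induction f using Sym2.ind with | h x y => ?_
      obtain ⟨hxy, hIH⟩ := hIH x y hf
      exact hIH.pinnedPF_ne_zero hxy hf hδ.two_mul_sq_lt_one hδ.le hc
  · by_cases hu₀ : edgeDegree E u = 0
    · rw [hu₀]
      exact norm_sub_le_of_edgeDegree_eq_zero hh (hδ.two_mul_le (by omega)) (hδ.nonneg 0) hu₀ hu
        i₁ i₂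
    · obtain ⟨f, hf, huf⟩ : ∃ f ∈ E, u ∈ f := by simpa [edgeDegree_eq_zero_iff] using hu₀
      obtain ⟨y, rfl⟩ := Sym2.mem_iff_exists.1 huf
      obtain ⟨huy, hIH⟩ := hIH u y hf
      exact hIH.norm_sub_le huy hf (by nlinarith [hδ.two_mul_sq_lt_one]) hδ.nonneg hδ.le
        hδ.le_mul_succ hc hu i₁ i₂

end Induction

lemma decaySequence_geometric {Δ : ℕ} {ε a : ℝ} (ha₀ : 0 ≤ a) (ha : 2 * a ^ 2 < 1)
    (hε : 1 ≤ Δ → 2 * ε ≤ (1 - ε) * (a * (1 - 2 * a ^ 2) ^ (Δ - 1))) :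
    DecaySequence Δ (fun d => a * (1 - 2 * a ^ 2) ^ (Δ - 1 - d)) ε a where
  two_mul_sq_lt_one := ha
  nonneg d := mul_nonneg ha₀ (pow_nonneg (by linarith) _)
  le d := mul_le_of_le_one_right ha₀ (pow_le_one₀ (by linarith) (by nlinarith))
  le_mul_succ d hd := by
    rw [show Δ - 1 - d = Δ - 1 - (d + 1) + 1 by omega, pow_succ]
    exact le_of_eq (by ring)
  two_mul_le := by simpa using hε

/-- For `Δ ≥ 4` Bernoulli's inequality `(1 - 2a²)^(Δ-1) ≥ 1 - 2(Δ-1)a²` suffices; smaller `Δ`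
are checked numerically. -/
lemma two_mul_le_decay_of_one_le {Δ : ℕ} (hΔ : 1 ≤ Δ) :
    2 * (0.351 / (Δ + 1)) ≤
      (1 - 0.351 / (Δ + 1)) * (1.2 / (Δ + 1) * (1 - 2 * (1.2 / (Δ + 1)) ^ 2) ^ (Δ - 1) : ℝ) := by
  obtain ⟨D, rfl⟩ : ∃ D, Δ = D + 1 := ⟨Δ - 1, by omega⟩
  match D with
  | 0 | 1 | 2 => norm_num
  | D + 3 =>
    set s : ℝ := (D : ℝ) + 5
    have hs : 5 ≤ s := by simp [s]
    rw [show ((D + 3 + 1 : ℕ) : ℝ) + 1 = s by push_cast; ring, show D + 3 + 1 - 1 = D + 3 by rfl]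
    have hbern : 1 - 2 * (s - 2) * (1.2 / s) ^ 2 ≤ (1 - 2 * (1.2 / s) ^ 2) ^ (D + 3) := by
      have := one_add_mul_le_pow (a := -(2 * (1.2 / s) ^ 2)) ?_ (D + 3)
      · rw [show ((D + 3 : ℕ) : ℝ) = s - 2 by push_cast; ring, ← sub_eq_add_neg] at this
        linarith
      · rw [div_pow, neg_le_neg_iff, mul_le_iff_le_one_right two_pos, div_le_one (by positivity)]
        nlinarith
    have hpoly :
        2 * (0.351 / s) ≤ (1 - 0.351 / s) * (1.2 / s * (1 - 2 * (s - 2) * (1.2 / s) ^ 2)) := by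
      have : (1 - 0.351 / s) * (1.2 / s * (1 - 2 * (s - 2) * (1.2 / s) ^ 2)) - 2 * (0.351 / s)
          = ((s - 0.351) * 1.2 * (s ^ 2 - 2.88 * (s - 2)) - 0.702 * s ^ 3) / s ^ 4 := by
        field_simp
        ring
      rw [← sub_nonneg, this]
      have : 0 ≤ (s - 0.351) * 1.2 * (s ^ 2 - 2.88 * (s - 2)) - 0.702 * s ^ 3 := by
        nlinarith [mul_nonneg (sub_nonneg.2 hs) (sub_nonneg.2 hs)]
      positivity
    refine hpoly.trans (mul_le_mul_of_nonneg_left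
      (mul_le_mul_of_nonneg_left hbern (by positivity)) ?_)
    rw [sub_nonneg, div_le_one (by positivity)]
    linarith

theorem exists_decaySequence (Δ : ℕ) : ∃ a δ, DecaySequence Δ δ (0.351 / (Δ + 1)) a := by
  rcases Nat.eq_zero_or_pos Δ with rfl | hΔ
  · exact ⟨0, _, decaySequence_geometric le_rfl (by norm_num) (by simp)⟩
  · refine ⟨1.2 / (Δ + 1), _, decaySequence_geometric (by positivity) ?_
      fun _ => two_mul_le_decay_of_one_le hΔ⟩
    have : (1 : ℝ) ≤ Δ := by exact_mod_cast hΔ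
    rw [div_pow, mul_div_assoc', div_lt_one (by positivity)]
    nlinarith

section Graph

variable {W : Type} [Fintype W] [DecidableEq W] {k : ℕ} (G : SimpleGraph W) [DecidableRel G.Adj]

lemma colorCount_edgeFinset (φ : Sym2 W → Fin k) (v : W) :
    colorCount G.edgeFinset φ v = colorVec G (fun e => φ e) v := by
  ext j
  rw [colorVec, Nat.card_congr (Equiv.subtypeSubtypeEquivSubtypeInter (· ∈ G.edgeSet)
    fun e => v ∈ e ∧ φ e = j), Nat.card_eq_fintype_card, Fintype.card_subtype, colorCount]
  congr 1
  ext e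
  simp

lemma totalDegree_edgeFinset_zero (v : W) :
    totalDegree G.edgeFinset (0 : W → Fin k → ℕ) v = deg G v := by
  rw [totalDegree, edgeDegree, ← G.incidenceFinset_eq_filter, G.card_incidenceFinset_eq_degree,
    deg, Nat.card_eq_fintype_card, G.card_neighborSet_eq_degree]
  simp

lemma pinnedPF_edgeFinset_zero (h : (Fin k → ℕ) → ℂ) :
    pinnedPF h G.edgeFinset 0 =
      (k : ℂ) ^ Fintype.card {e : Sym2 W // e ∉ G.edgeSet} * pf k G h := by
  rw [pinnedPF, pf, finsum_eq_sum_of_fintype, ← Fintype.sum_equiv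
    (Equiv.piEquivPiSubtypeProd (· ∈ G.edgeSet) fun _ => Fin k).symm _ _ fun _ => rfl,
    Fintype.sum_prod_type, Finset.sum_comm]
  simp [colorCount_edgeFinset, Equiv.piEquivPiSubtypeProd]

end Graph

end EdgeColoringModel

open EdgeColoringModel

/-- there is a constant `β > 0.35` such that the partition function of any
`k`-color edge-coloring model `h` with `|h(α) − 1| ≤ β/(Δ+1)` for all `α` with `|α| ≤ Δ`
does not vanish on simple graphs of maximum degree at most `Δ`. -/
theorem stmt0 (k : ℕ) (hk : 2 ≤ k) (Δ : ℕ) :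
    ∃ β : ℝ, 0.35 < β ∧
      ∀ h : (Fin k → ℕ) → ℂ,
        (∀ α : Fin k → ℕ, (∑ j, α j) ≤ Δ → ‖h α - 1‖ ≤ β / (Δ + 1 : ℝ)) →
        ∀ (W : Type) [Fintype W] [DecidableEq W] (G : SimpleGraph W),
          maxDeg G ≤ Δ → pf k G h ≠ 0 := by
  classical
  refine ⟨0.351, by norm_num, fun h hh W _ _ G hG => ?_⟩
  have : NeZero k := ⟨by omega⟩
  obtain ⟨a, δ, hδ⟩ := exists_decaySequence Δ
  have hε : 0.351 / ((Δ : ℝ) + 1) < 1 := by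
    rw [div_lt_one (by positivity)]
    linarith [Δ.cast_nonneg (α := ℝ)]
  have hc : ∀ v, totalDegree G.edgeFinset (0 : W → Fin k → ℕ) v ≤ Δ := fun v =>
    (totalDegree_edgeFinset_zero G v).trans_le ((le_sup (mem_univ v)).trans hG)
  have hne := (pinnedBounds hh hε hδ (fun e he => G.not_isDiag_of_mem_edgeSet
    (G.mem_edgeFinset.1 he)) 0 hc).1
  rw [pinnedPF_edgeFinset_zero] at hne
  exact right_ne_zero_of_mul hne
end

section
/- Let G = (V,E) be a finite simple graph, let η > 0, let θ ∈ (0, 2π/3), let β be a real number with 0 < β ≤ η·θ·cos(θ/2), and set δ := min{η, β/(Δ(G)+1)}; assume δ < 1. Then for every tensor network h ∈ S_G(δ,η) one has |p(G)(h)| ≥ (cos(θ/2)·η)^{|V|} · k^{|E|}; in particular p(G)(h) ≠ 0. -/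
noncomputable section

variable {V : Type} [Fintype V] [DecidableEq V]

/-- Contraction of the tensor network `(G, h)`:
`p(G)(h) = Σ_{φ : E → [k]} Π_{v ∈ V} h^v(φ(δ(v)))`. -/
def tnc (k : ℕ) (G : SimpleGraph V) (h : V → (Fin k → ℕ) → ℂ) : ℂ :=
  ∑ᶠ φ : G.edgeSet → Fin k, ∏ v : V, h v (colorVec G φ v)

/-- Membership in `S_G(δ,η)`: for every vertex `v` and all `α, α' ∈ ℕ^k` with
`|α| = |α'| = deg(v)` we have `|h^v(α) − h^v(α')| < δ` and `|h^v(α)| ≥ η`. -/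
def memS (k : ℕ) (G : SimpleGraph V) (h : V → (Fin k → ℕ) → ℂ) (δ η : ℝ) : Prop :=
  ∀ v : V, ∀ α α' : Fin k → ℕ, (∑ j, α j) = deg G v → (∑ j, α' j) = deg G v →
    ‖h v α - h v α'‖ < δ ∧ η ≤ ‖h v α‖


/-!
Barvinok's sector argument, run as an induction over vertex sets `W`. Let `tncOn W ψ` be the
contraction of the subnetwork on `W` in which every edge not inside `W` keeps its `ψ`-color.
Expanding at a vertex `u ∉ W` writes `tncOn (insert u W) ψ` as a sum of the products
`h^u(ξ) · tncOn W ξ` over the recolorings `ξ` of the edges between `u` and `W`. Two facts are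
proved together by strong induction on `W`:
* `‖tncOn W ψ‖ ≥ (cos (θ/2) η)^|W| k^|E(W)|`;
* recoloring one edge that leaves `W` turns `tncOn W ψ` by an angle at most `w`.
By the second fact, the summands of the expansion are pairwise at angle at most
`arcsin (δ/η) + Δ w ≤ θ < 2π/3`, so their sum has norm at least `cos (θ/2)` times the sum of
their norms; this gives the first fact. For the second, expand at the endpoint `b ∈ W` of the
recolored edge: the two expansions differ only in the factors `h^b`, each by less than `δ`, so
the relative change of `tncOn W ψ` is less than `δ / (cos (θ/2) η)`, and the angle is at most
its arcsine. The constraint `δ (Δ + 1) ≤ β ≤ η θ cos (θ/2)` is what makes these angles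
add up to at most `θ`; when `Δ ≤ 1` the expansion at `b` has a single term and `w = arcsin (δ/η)`.
-/

set_option linter.unusedSectionVars false

open Real InnerProductGeometry Finset

namespace InnerProductGeometry

variable {E : Type*} [NormedAddCommGroup E] [InnerProductSpace ℝ E]

theorem angle_le_arcsin_of_norm_sub_lt {x y : E} {s : ℝ} (h : ‖x - y‖ < s * ‖y‖) (hs : s ≤ 1) :
    angle x y ≤ arcsin s := by
  have hsy : 0 < s * ‖y‖ := (norm_nonneg _).trans_lt h
  have hy : 0 < ‖y‖ := by nlinarith [norm_nonneg y]
  have hs0 : 0 < s := by nlinarith [norm_nonneg y]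
  have hx : 0 < ‖x‖ := by
    refine norm_pos_iff.2 fun hx => ?_
    rw [hx, zero_sub, norm_neg] at h
    nlinarith
  have hsq : ‖x - y‖ ^ 2 = ‖x‖ ^ 2 - 2 * inner ℝ x y + ‖y‖ ^ 2 := norm_sub_sq_real x y
  have ht : √(1 - s ^ 2) ^ 2 = 1 - s ^ 2 := sq_sqrt (by nlinarith)
  -- `2 ⟪x, y⟫ ≥ ‖x‖² + (1 - s²) ‖y‖² ≥ 2 √(1 - s²) ‖x‖ ‖y‖` by AM-GM
  have hinner : ‖x‖ * ‖y‖ * √(1 - s ^ 2) ≤ inner ℝ x y := by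
    nlinarith [sq_nonneg (‖x‖ - ‖y‖ * √(1 - s ^ 2)), norm_nonneg (x - y), sqrt_nonneg (1 - s ^ 2)]
  rw [arcsin_eq_arccos hs0.le, angle]
  refine arccos_le_arccos ?_
  rw [le_div_iff₀ (by positivity)]
  linarith

theorem angle_le_arcsin_div_of_norm_sub_lt {x y : E} {δ γ S : ℝ} (h : ‖x - y‖ < δ * S)
    (hlow : γ * S ≤ ‖y‖) (hγ : 0 < γ) (hδ : 0 ≤ δ) (hδγ : δ ≤ γ) :
    angle x y ≤ arcsin (δ / γ) := by
  refine angle_le_arcsin_of_norm_sub_lt ?_ ((div_le_one hγ).2 hδγ)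
  calc ‖x - y‖ < δ * S := h
    _ = δ / γ * (γ * S) := by field_simp
    _ ≤ δ / γ * ‖y‖ := by gcongr

theorem cos_mul_sum_norm_le_norm_sum {ι : Type*} (s : Finset ι) (z : ι → E) {u : E} {θ : ℝ}
    (hu : u ≠ 0) (hθ : θ ≤ π) (h : ∀ i ∈ s, angle (z i) u ≤ θ) :
    cos θ * ∑ i ∈ s, ‖z i‖ ≤ ‖∑ i ∈ s, z i‖ := by
  have hu' : 0 < ‖u‖ := norm_pos_iff.mpr hu
  refine le_of_mul_le_mul_right ?_ hu'
  calc (cos θ * ∑ i ∈ s, ‖z i‖) * ‖u‖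
      = ∑ i ∈ s, cos θ * (‖z i‖ * ‖u‖) := by simp only [Finset.mul_sum, Finset.sum_mul, mul_assoc]
    _ ≤ ∑ i ∈ s, cos (angle (z i) u) * (‖z i‖ * ‖u‖) := by
        gcongr with i hi
        exact Real.cos_le_cos_of_nonneg_of_le_pi (angle_nonneg _ _) hθ (h i hi)
    _ = inner ℝ (∑ i ∈ s, z i) u := by
        simp only [cos_angle_mul_norm_mul_norm, sum_inner]
    _ ≤ ‖∑ i ∈ s, z i‖ * ‖u‖ := real_inner_le_norm _ _

end InnerProductGeometry

theorem Real.Angle.eq_of_coe_eq_of_abs_sub_lt {x y : ℝ} (h : (x : Real.Angle) = y)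
    (hxy : |x - y| < 2 * π) : x = y := by
  obtain ⟨n, hn⟩ := Real.Angle.angle_eq_iff_two_pi_dvd_sub.mp h
  rw [hn, abs_mul, abs_of_pos two_pi_pos] at hxy
  have : n = 0 := by
    rw [← Int.abs_lt_one_iff]
    exact_mod_cast (mul_lt_iff_lt_one_right two_pi_pos).mp hxy
  linarith [show x - y = 0 by simp [hn, this]]

theorem exists_forall_abs_sub_midpoint_le {ι : Type*} {s : Finset ι} (hs : s.Nonempty)
    {ψ : ι → ℝ} {θ : ℝ} (h : ∀ i ∈ s, ∀ j ∈ s, ψ i - ψ j ≤ θ) :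
    ∃ i₁ ∈ s, ∃ i₂ ∈ s, ∀ i ∈ s, |ψ i - (ψ i₁ + ψ i₂) / 2| ≤ θ / 2 := by
  obtain ⟨i₁, hi₁, hmax⟩ := s.exists_max_image ψ hs
  obtain ⟨i₂, hi₂, hmin⟩ := s.exists_min_image ψ hs
  refine ⟨i₁, hi₁, i₂, hi₂, fun i hi => ?_⟩
  have := hmax i hi; have := hmin i hi; have := h i₁ hi₁ i₂ hi₂
  rw [abs_le]; constructor <;> linarith

namespace Complex

theorem angle_mul_le_add {z₁ z₂ w₁ w₂ : ℂ} (hz₂ : z₂ ≠ 0) (hw₁ : w₁ ≠ 0) :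
    angle (z₁ * z₂) (w₁ * w₂) ≤ angle z₁ w₁ + angle z₂ w₂ := by
  calc angle (z₁ * z₂) (w₁ * w₂) ≤ angle (z₁ * z₂) (w₁ * z₂) + angle (w₁ * z₂) (w₁ * w₂) :=
        angle_le_angle_add_angle _ _ _
    _ = angle z₁ w₁ + angle z₂ w₂ := by
        rw [angle_mul_right hz₂, angle_mul_left hw₁]

theorem arg_div_eq_sub_of_abs_add_abs_lt {x y : ℂ} {a b : ℝ} (hx : x ≠ 0) (hy : y ≠ 0)
    (hxa : (x.arg : Real.Angle) = a) (hyb : (y.arg : Real.Angle) = b)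
    (hlt : |(x / y).arg| + |a - b| < 2 * π) : (x / y).arg = a - b := by
  refine Real.Angle.eq_of_coe_eq_of_abs_sub_lt ?_ ?_
  · rw [arg_div_coe_angle hx hy, hxa, hyb, Real.Angle.coe_sub]
  · exact (abs_sub _ _).trans_lt hlt

theorem exists_angle_le_half {ι : Type*} (s : Finset ι) (z : ι → ℂ) {θ : ℝ} (hθ : θ < 2 * π / 3)
    (hz : ∀ i ∈ s, z i ≠ 0) (h : ∀ i ∈ s, ∀ j ∈ s, angle (z i) (z j) ≤ θ) :
    ∃ u ≠ 0, ∀ i ∈ s, angle (z i) u ≤ θ / 2 := by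
  rcases s.eq_empty_or_nonempty with rfl | ⟨i₀, hi₀⟩
  · exact ⟨1, one_ne_zero, by simp⟩
  have hπ := pi_pos
  have hz₀ := hz i₀ hi₀
  set ψ : ι → ℝ := fun i => arg (z i / z i₀) with hψ_def
  have hψ : ∀ i ∈ s, |ψ i| ≤ θ := fun i hi => by
    rw [hψ_def, ← angle_eq_abs_arg (hz i hi) hz₀]
    exact h i hi i₀ hi₀
  -- as `3 θ < 2 π`, the difference `ψ i - ψ j` does not wrap around the circle
  have hdiff : ∀ i ∈ s, ∀ j ∈ s, ψ i - ψ j ≤ θ := by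
    intro i hi j hj
    have hzij : z i / z j = z i / z i₀ / (z j / z i₀) := by field_simp [hz₀, hz j hj]
    have hij : |arg (z i / z j)| ≤ θ := by
      rw [← angle_eq_abs_arg (hz i hi) (hz j hj)]
      exact h i hi j hj
    have harg : arg (z i / z j) = ψ i - ψ j := by
      rw [hzij]
      refine arg_div_eq_sub_of_abs_add_abs_lt (div_ne_zero (hz i hi) hz₀)
        (div_ne_zero (hz j hj) hz₀) rfl rfl ?_
      rw [← hzij]
      have := abs_sub (ψ i) (ψ j)
      linarith [hψ i hi, hψ j hj]
    exact (le_abs_self _).trans (harg ▸ hij)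
  obtain ⟨i₁, hi₁, i₂, hi₂, hmid⟩ := exists_forall_abs_sub_midpoint_le ⟨i₀, hi₀⟩ hdiff
  set m := (ψ i₁ + ψ i₂) / 2 with hm
  have hexp : arg (exp (m * I)) = m := by
    have h₁ := abs_le.1 (hψ i₁ hi₁)
    have h₂ := abs_le.1 (hψ i₂ hi₂)
    rw [arg_exp_mul_I, toIocMod_eq_self]
    constructor <;> linarith
  refine ⟨z i₀ * exp (m * I), mul_ne_zero hz₀ (exp_ne_zero _), fun i hi => ?_⟩
  rw [angle_eq_abs_arg (hz i hi) (mul_ne_zero hz₀ (exp_ne_zero _)), ← div_div,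
    arg_div_eq_sub_of_abs_add_abs_lt (div_ne_zero (hz i hi) hz₀) (exp_ne_zero _) rfl
      (by rw [hexp]) ?_]
  · exact hmid i hi
  · linarith [abs_arg_le_pi (z i / z i₀ / exp (m * I)), hmid i hi]

theorem cos_half_mul_sum_norm_le_norm_sum {ι : Type*} (s : Finset ι) (z : ι → ℂ) {θ : ℝ}
    (hθ : θ < 2 * π / 3) (hz : ∀ i ∈ s, z i ≠ 0) (h : ∀ i ∈ s, ∀ j ∈ s, angle (z i) (z j) ≤ θ) :
    Real.cos (θ / 2) * ∑ i ∈ s, ‖z i‖ ≤ ‖∑ i ∈ s, z i‖ := by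
  obtain ⟨u, hu, hzu⟩ := exists_angle_le_half s z hθ hz h
  exact cos_mul_sum_norm_le_norm_sum s z hu (by linarith [pi_pos]) hzu

end Complex

theorem norm_sum_mul_sub_sum_mul_lt {ι 𝕜 : Type*} [NormedDivisionRing 𝕜] {s : Finset ι}
    (hs : s.Nonempty) {f g z : ι → 𝕜} {δ : ℝ} (hfg : ∀ i ∈ s, ‖f i - g i‖ < δ)
    (hz : ∀ i ∈ s, z i ≠ 0) :
    ‖∑ i ∈ s, f i * z i - ∑ i ∈ s, g i * z i‖ < δ * ∑ i ∈ s, ‖z i‖ := by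
  rw [← sum_sub_distrib, mul_sum]
  refine (norm_sum_le _ _).trans_lt (sum_lt_sum_of_nonempty hs fun i hi => ?_)
  rw [← sub_mul, norm_mul]
  exact mul_lt_mul_of_pos_right (hfg i hi) (norm_pos_iff.2 (hz i hi))

section Recoloring

variable {ι κ : Type*} [Fintype ι] [DecidableEq ι] [Fintype κ] [DecidableEq κ]

def agreeOff (S : Finset ι) (ψ : ι → κ) : Finset (ι → κ) := {φ | ∀ i ∉ S, φ i = ψ i}

variable {S T : Finset ι} {ψ φ : ι → κ}

@[simp] theorem mem_agreeOff : φ ∈ agreeOff S ψ ↔ ∀ i ∉ S, φ i = ψ i := by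
  simp [agreeOff]

theorem self_mem_agreeOff : ψ ∈ agreeOff S ψ := mem_agreeOff.2 fun _ _ => rfl

theorem agreeOff_empty : agreeOff ∅ ψ = {ψ} := by
  ext φ
  simp [funext_iff]

theorem agreeOff_univ : agreeOff univ ψ = univ := by
  ext φ
  simp

theorem card_agreeOff : #(agreeOff S ψ) = Fintype.card κ ^ #S := by
  have : agreeOff S ψ = Fintype.piFinset fun i => if i ∈ S then univ else {ψ i} := by
    ext φ
    simp only [mem_agreeOff, Fintype.mem_piFinset]
    refine forall_congr' fun i => ?_
    split_ifs <;> simp [*]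
  rw [this, Fintype.card_piFinset]
  simp [apply_ite]

theorem sum_agreeOff_union {M : Type*} [AddCommMonoid M] (hST : Disjoint S T) (ψ : ι → κ)
    (f : (ι → κ) → M) :
    ∑ φ ∈ agreeOff (S ∪ T) ψ, f φ = ∑ ξ ∈ agreeOff T ψ, ∑ φ ∈ agreeOff S ξ, f φ := by
  have hmaps : ∀ φ ∈ agreeOff (S ∪ T) ψ, T.piecewise φ ψ ∈ agreeOff T ψ := fun φ _ =>
    mem_agreeOff.2 fun i hi => piecewise_eq_of_notMem _ _ _ hi
  rw [← sum_fiberwise_of_maps_to hmaps]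
  refine sum_congr rfl fun ξ hξ => sum_congr ?_ fun _ _ => rfl
  ext φ
  simp only [mem_filter, mem_agreeOff, mem_union, not_or] at hξ ⊢
  constructor
  · rintro ⟨hφ, rfl⟩ i hiS
    by_cases hiT : i ∈ T
    · simp [hiT]
    · simp [hiT, hφ i ⟨hiS, hiT⟩]
  · intro hφ
    refine ⟨fun i hi => (hφ i hi.1).trans (hξ i hi.2), funext fun i => ?_⟩
    by_cases hiT : i ∈ T
    · simp [hiT, hφ i (disjoint_right.1 hST hiT)]
    · simp [hiT, hξ i hiT]

theorem sum_agreeOff_update {M : Type*} [AddCommMonoid M] {i : ι} (hi : i ∉ S) (ψ : ι → κ)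
    (c : κ) (f : (ι → κ) → M) :
    ∑ φ ∈ agreeOff S (Function.update ψ i c), f φ =
      ∑ φ ∈ agreeOff S ψ, f (Function.update φ i c) := by
  symm
  refine sum_nbij' (Function.update · i c) (Function.update · i (ψ i)) ?_ ?_ ?_ ?_ fun _ _ => rfl
  all_goals intro φ hφ; simp only [mem_agreeOff] at hφ
  · refine mem_agreeOff.2 fun j hj => ?_
    rcases eq_or_ne j i with rfl | hji
    · simp
    · simp [hji, hφ j hj]
  · refine mem_agreeOff.2 fun j hj => ?_
    rcases eq_or_ne j i with rfl | hji
    · simp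
    · simp [hji, hφ j hj]
  · rw [Function.update_idem, ← hφ i hi, Function.update_eq_self]
  · rw [Function.update_idem, Function.update_eq_iff, hφ i hi, Function.update_self]
    exact ⟨rfl, fun _ _ => rfl⟩

theorem angle_le_card_mul_of_mem_agreeOff {E : Type*} [NormedAddCommGroup E]
    [InnerProductSpace ℝ E] {S : Finset ι} {f : (ι → κ) → E} {w : ℝ}
    (hf : ∀ φ, f φ ≠ 0)
    (hstep : ∀ φ, ∀ i ∈ S, ∀ c, angle (f φ) (f (Function.update φ i c)) ≤ w)
    {ξ ζ : ι → κ} (hζ : ζ ∈ agreeOff S ξ) : angle (f ξ) (f ζ) ≤ #S * w := by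
  induction S using Finset.induction_on generalizing ζ with
  | empty =>
    rw [agreeOff_empty, mem_singleton] at hζ
    simp [hζ, angle_self (hf ξ)]
  | insert i S hi ih =>
    set ζ' := Function.update ζ i (ξ i)
    have hζ' : ζ' ∈ agreeOff S ξ := mem_agreeOff.2 fun j hj => by
      rcases eq_or_ne j i with rfl | hji
      · simp [ζ']
      · simp [ζ', hji, mem_agreeOff.1 hζ j (by simp [hji, hj])]
    have hζζ' : ζ = Function.update ζ' i (ζ i) := by simp [ζ']
    calc angle (f ξ) (f ζ) ≤ angle (f ξ) (f ζ') + angle (f ζ') (f ζ) :=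
          angle_le_angle_add_angle _ _ _
      _ ≤ #S * w + w := by
          gcongr
          · exact ih (fun φ j hj => hstep φ j (mem_insert_of_mem hj)) hζ'
          · rw [hζζ']; exact hstep ζ' i (mem_insert_self i S) _
      _ = #(insert i S) * w := by rw [card_insert_of_notMem hi]; push_cast; ring

theorem cos_half_mul_sum_le_norm_sum_mul (S : Finset ι) (ψ : ι → κ) {f g : (ι → κ) → ℂ}
    {ε w θ : ℝ} (hθ : θ ∈ Set.Ico 0 (2 * π / 3)) (hf : ∀ φ, f φ ≠ 0) (hg : ∀ φ, g φ ≠ 0)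
    (hstep : ∀ φ, ∀ i ∈ S, ∀ c, angle (f φ) (f (Function.update φ i c)) ≤ w)
    (hgε : ∀ φ φ', angle (g φ) (g φ') ≤ ε) (hbudget : S.Nonempty → ε + #S * w ≤ θ) :
    Real.cos (θ / 2) * ∑ φ ∈ agreeOff S ψ, ‖g φ‖ * ‖f φ‖ ≤ ‖∑ φ ∈ agreeOff S ψ, g φ * f φ‖ := by
  simp_rw [← norm_mul]
  refine Complex.cos_half_mul_sum_norm_le_norm_sum _ _ hθ.2
    (fun φ _ => mul_ne_zero (hg φ) (hf φ)) fun ξ hξ ζ hζ => ?_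
  rcases S.eq_empty_or_nonempty with rfl | hS
  · rw [agreeOff_empty, mem_singleton] at hξ hζ
    rw [hξ, hζ, angle_self (mul_ne_zero (hg ψ) (hf ψ))]
    exact hθ.1
  have hζξ : ζ ∈ agreeOff S ξ := mem_agreeOff.2 fun i hi =>
    (mem_agreeOff.1 hζ i hi).trans (mem_agreeOff.1 hξ i hi).symm
  calc angle (g ξ * f ξ) (g ζ * f ζ) ≤ angle (g ξ) (g ζ) + angle (f ξ) (f ζ) :=
        Complex.angle_mul_le_add (hf ξ) (hg ζ)
    _ ≤ ε + #S * w := add_le_add (hgε ξ ζ) (angle_le_card_mul_of_mem_agreeOff hf hstep hζξ)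
    _ ≤ θ := hbudget hS

end Recoloring

namespace Real

theorem arcsin_le_add_cube_div_four {y : ℝ} (h0 : 0 ≤ y) (h1 : y ≤ 7 / 10) :
    arcsin y ≤ y + y ^ 3 / 4 := by
  have hπ := pi_gt_three
  have ht : y + y ^ 3 / 4 ≤ 1 := by nlinarith [pow_le_pow_left₀ h0 h1 3]
  rw [arcsin_le_iff_le_sin ⟨by linarith, by linarith⟩ ⟨by nlinarith [pow_nonneg h0 3], by linarith⟩]
  have hsin := sin_ge_sub_cube (x := y + y ^ 3 / 4) (by positivity)
  have hy2 : y ^ 2 ≤ 49 / 100 := by nlinarith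
  have hcube : (1 + y ^ 2 / 4) ^ 3 ≤ 3 / 2 := by
    have : 1 + y ^ 2 / 4 ≤ 1.1225 := by linarith
    calc (1 + y ^ 2 / 4) ^ 3 ≤ 1.1225 ^ 3 := pow_le_pow_left₀ (by positivity) this 3
      _ ≤ 3 / 2 := by norm_num
  have : (y + y ^ 3 / 4) ^ 3 = y ^ 3 * (1 + y ^ 2 / 4) ^ 3 := by ring
  nlinarith [pow_nonneg h0 3]

theorem arcsin_mul_cos_le {x : ℝ} (h0 : 0 ≤ x) (h1 : x < π / 2) : arcsin (x * cos x) ≤ x := by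
  have hcos : 0 < cos x := cos_pos_of_mem_Ioo ⟨by linarith, h1⟩
  rw [arcsin_le_iff_le_sin' ⟨by linarith, h1⟩]
  have := le_tan h0 h1
  rwa [tan_eq_sin_div_cos, le_div_iff₀ hcos] at this

theorem sq_div_twelve_le_one_sub_cos_half {θ : ℝ} (h0 : 0 ≤ θ) (h1 : θ ≤ π) :
    θ ^ 2 / 12 ≤ 1 - cos (θ / 2) := by
  have hπ := pi_lt_four
  have hsin := sin_ge_sub_cube (x := θ / 4) (by positivity)
  have hcos : cos (θ / 2) = 1 - 2 * sin (θ / 4) ^ 2 := by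
    rw [← cos_two_mul_eq_one_sub]; ring_nf
  have hθ2 : θ ^ 2 ≤ 16 := by nlinarith
  have hpos : 0 ≤ θ / 4 - (θ / 4) ^ 3 / 6 := by nlinarith
  have hsq : (θ / 4 - (θ / 4) ^ 3 / 6) ^ 2 ≤ sin (θ / 4) ^ 2 := pow_le_pow_left₀ hpos hsin 2
  rw [hcos]
  nlinarith [sq_nonneg θ, mul_nonneg (sq_nonneg θ) (sub_nonneg.2 hθ2)]

theorem arcsin_cos_mul_add_mul_arcsin_le {n : ℕ} {θ : ℝ} (hn : 2 ≤ n) (h0 : 0 ≤ θ)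
    (h1 : θ < 2 * π / 3) :
    arcsin (cos (θ / 2) * (θ / (n + 1))) + n * arcsin (θ / (n + 1)) ≤ θ := by
  have hπ := pi_lt_d2
  have hn' : (2 : ℝ) ≤ n := by exact_mod_cast hn
  set x := θ / (n + 1) with hx
  set c := cos (θ / 2)
  have hθx : θ = (n + 1) * x := by rw [hx]; field_simp
  have hx0 : 0 ≤ x := by positivity
  have hx7 : x ≤ 7 / 10 := by rw [hx, div_le_iff₀ (by positivity)]; nlinarith
  have hc0 : 0 ≤ c := cos_nonneg_of_mem_Icc ⟨by linarith, by linarith⟩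
  have hc1 : c ≤ 1 := cos_le_one _
  have hcx := arcsin_le_add_cube_div_four (mul_nonneg hc0 hx0) (by nlinarith)
  have hx' := arcsin_le_add_cube_div_four hx0 hx7
  have hgap := sq_div_twelve_le_one_sub_cos_half h0 (by linarith)
  -- the cubic error terms are absorbed by the gain `(1 - c) x`, since `(n + 1) x ^ 2 ≤ θ ^ 2 / 3`
  have hcube : x ^ 3 * (c ^ 3 + n) / 4 ≤ (1 - c) * x := by
    have hc3 : c ^ 3 ≤ 1 := pow_le_one₀ hc0 hc1
    have : x ^ 2 * (n + 1) ≤ θ ^ 2 / 3 := by rw [hθx]; nlinarith [sq_nonneg x]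
    nlinarith [mul_nonneg hx0 (sq_nonneg x)]
  calc arcsin (c * x) + n * arcsin x ≤ (c * x + (c * x) ^ 3 / 4) + n * (x + x ^ 3 / 4) := by
        gcongr
    _ = (n + c) * x + x ^ 3 * (c ^ 3 + n) / 4 := by ring
    _ ≤ θ := by rw [hθx]; linarith

end Real

theorem exists_angle_budget {Δ : ℕ} {η δ θ : ℝ} (hη : 0 < η) (hθ : θ ∈ Set.Ico 0 (2 * π / 3))
    (hδ : 0 ≤ δ) (hδθ : δ * (Δ + 1) ≤ η * θ * cos (θ / 2)) :
    ∃ w, arcsin (δ / η) ≤ w ∧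
      (2 ≤ Δ → δ ≤ cos (θ / 2) * η ∧ arcsin (δ / (cos (θ / 2) * η)) ≤ w) ∧
      (1 ≤ Δ → arcsin (δ / η) + Δ * w ≤ θ) := by
  have hπ := pi_gt_three
  have hc : 0 < cos (θ / 2) :=
    cos_pos_of_mem_Ioo ⟨by linarith [hθ.1], by linarith [hθ.2]⟩
  rcases le_or_gt Δ 1 with hΔ | hΔ
  · refine ⟨arcsin (δ / η), le_rfl, fun h2 => absurd h2 (by omega), fun h1 => ?_⟩
    obtain rfl : Δ = 1 := by omega
    have hx : δ / η ≤ θ / 2 * cos (θ / 2) := by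
      rw [div_le_iff₀ hη]
      push_cast at hδθ
      linarith
    have := (arcsin_le_arcsin hx).trans
      (arcsin_mul_cos_le (by linarith [hθ.1]) (by linarith [hθ.2]))
    push_cast
    linarith
  set c := cos (θ / 2)
  have hΔ' : (2 : ℝ) ≤ Δ := by exact_mod_cast hΔ
  have hb : δ / (c * η) ≤ θ / (Δ + 1) := by
    rw [div_le_div_iff₀ (by positivity) (by positivity)]
    nlinarith
  have ha : δ / η ≤ c * (θ / (Δ + 1)) := by
    rw [div_le_iff₀ hη, mul_div_assoc', div_mul_eq_mul_div, le_div_iff₀ (by positivity)]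
    linarith
  refine ⟨arcsin (δ / (c * η)), arcsin_le_arcsin ?_, fun _ => ⟨?_, le_rfl⟩, fun _ => ?_⟩
  · exact div_le_div_of_nonneg_left hδ (by positivity) (mul_le_of_le_one_left hη.le (cos_le_one _))
  · have : θ / (Δ + 1) ≤ 1 := by
      rw [div_le_one (by positivity)]
      linarith [hθ.2, pi_le_four]
    exact (div_le_one (by positivity)).1 (hb.trans this)
  · calc arcsin (δ / η) + Δ * arcsin (δ / (c * η))
        ≤ arcsin (c * (θ / (Δ + 1))) + Δ * arcsin (θ / (Δ + 1)) := by
          gcongr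
      _ ≤ θ := arcsin_cos_mul_add_mul_arcsin_le hΔ hθ.1 hθ.2

namespace TensorNetwork

variable {k : ℕ} (G : SimpleGraph V) [Fintype G.edgeSet]

def innerEdges (W : Finset V) : Finset G.edgeSet := {e | (e : Sym2 V) ∈ W.sym2}

def incidentEdges (v : V) : Finset G.edgeSet := {e | v ∈ (e : Sym2 V)}

def linkEdges (u : V) (W : Finset V) : Finset G.edgeSet :=
  innerEdges G (insert u W) \ innerEdges G W

variable {G}

@[simp] theorem mem_innerEdges {W : Finset V} {e : G.edgeSet} :
    e ∈ innerEdges G W ↔ ∀ v ∈ (e : Sym2 V), v ∈ W := by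
  simp [innerEdges, mem_sym2_iff]

@[simp] theorem mem_incidentEdges {v : V} {e : G.edgeSet} :
    e ∈ incidentEdges G v ↔ v ∈ (e : Sym2 V) := by
  simp [incidentEdges]

theorem colorVec_congr {φ ψ : G.edgeSet → Fin k} {v : V}
    (h : ∀ e ∈ incidentEdges G v, φ e = ψ e) : colorVec G φ v = colorVec G ψ v := by
  funext j
  exact Nat.card_congr (Equiv.subtypeEquivRight fun e =>
    and_congr_right fun hv => by rw [h e (mem_incidentEdges.2 hv)])

variable (G)

theorem innerEdges_empty : innerEdges G ∅ = ∅ := by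
  ext e
  simpa using ⟨_, (e : Sym2 V).out_fst_mem⟩

theorem innerEdges_univ : innerEdges G univ = univ := by
  ext e
  simp

theorem card_incidentEdges (v : V) : #(incidentEdges G v) = deg G v := by
  rw [deg, ← Nat.card_congr (G.incidenceSetEquivNeighborSet v), incidentEdges,
    ← Fintype.card_subtype, ← Nat.card_eq_fintype_card]
  exact Nat.card_congr (Equiv.subtypeSubtypeEquivSubtypeInter (· ∈ G.edgeSet) (v ∈ ·))

theorem innerEdges_insert (u : V) (W : Finset V) :
    innerEdges G (insert u W) = innerEdges G W ∪ linkEdges G u W :=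
  (union_sdiff_of_subset fun e he => by
    simp only [mem_innerEdges] at he ⊢
    exact fun v hv => mem_insert_of_mem (he v hv)).symm

theorem disjoint_linkEdges (u : V) (W : Finset V) : Disjoint (innerEdges G W) (linkEdges G u W) :=
  disjoint_sdiff

theorem linkEdges_subset_incidentEdges (u : V) (W : Finset V) :
    linkEdges G u W ⊆ incidentEdges G u := by
  intro e he
  simp only [linkEdges, mem_sdiff, mem_innerEdges, not_forall] at he
  obtain ⟨hin, v, hv, hvW⟩ := he
  rcases mem_insert.1 (hin v hv) with rfl | h
  · exact mem_incidentEdges.2 hv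
  · exact absurd h hvW

theorem sum_colorVec (φ : G.edgeSet → Fin k) (v : V) : ∑ j, colorVec G φ v j = deg G v := by
  rw [← card_incidentEdges, card_eq_sum_card_fiberwise (f := φ) (t := univ) fun _ _ => mem_univ _]
  refine sum_congr rfl fun j _ => ?_
  rw [colorVec, Nat.card_eq_fintype_card, Fintype.card_subtype]
  simp [incidentEdges, filter_filter]

theorem deg_le_maxDeg (v : V) : deg G v ≤ maxDeg G := le_sup (mem_univ v)

theorem forall_notMem_of_notMem_innerEdges_insert {b : V} {W : Finset V} {e : G.edgeSet}
    (hb : b ∉ W) (hbe : b ∈ (e : Sym2 V)) (he : e ∉ innerEdges G (insert b W)) :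
    ∀ v ∈ W, v ∉ (e : Sym2 V) := by
  intro v hv hve
  refine he (mem_innerEdges.2 fun x hx => ?_)
  rw [(Sym2.mem_and_mem_iff (ne_of_mem_of_not_mem hv hb).symm).1 ⟨hbe, hve⟩, Sym2.mem_iff] at hx
  rcases hx with rfl | rfl
  · exact mem_insert_self _ _
  · exact mem_insert_of_mem hv

theorem two_le_maxDeg_of_linkEdges_nonempty {b : V} {W : Finset V} {e : G.edgeSet}
    (hbe : b ∈ (e : Sym2 V)) (he : e ∉ linkEdges G b W) (hL : (linkEdges G b W).Nonempty) :
    2 ≤ maxDeg G := by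
  have hlt : #(linkEdges G b W) < #(incidentEdges G b) := card_lt_card <|
    (ssubset_iff_of_subset (linkEdges_subset_incidentEdges G b W)).2
      ⟨e, mem_incidentEdges.2 hbe, he⟩
  have := hL.card_pos
  have := deg_le_maxDeg G b
  rw [card_incidentEdges] at hlt
  omega

variable (h : V → (Fin k → ℕ) → ℂ)

def tncOn (W : Finset V) (ψ : G.edgeSet → Fin k) : ℂ :=
  ∑ φ ∈ agreeOff (innerEdges G W) ψ, ∏ v ∈ W, h v (colorVec G φ v)

theorem tncOn_empty (ψ : G.edgeSet → Fin k) : tncOn G h ∅ ψ = 1 := by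
  simp [tncOn, innerEdges_empty, agreeOff_empty]

theorem tnc_eq_tncOn_univ (ψ : G.edgeSet → Fin k) : tnc k G h = tncOn G h univ ψ := by
  rw [tnc, finsum_eq_sum_of_fintype, tncOn, innerEdges_univ, agreeOff_univ]

theorem tncOn_insert {u : V} {W : Finset V} (hu : u ∉ W) (ψ : G.edgeSet → Fin k) :
    tncOn G h (insert u W) ψ =
      ∑ ξ ∈ agreeOff (linkEdges G u W) ψ, h u (colorVec G ξ u) * tncOn G h W ξ := by
  rw [tncOn, innerEdges_insert, sum_agreeOff_union (disjoint_linkEdges G u W)]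
  refine sum_congr rfl fun ξ _ => ?_
  rw [tncOn, mul_sum]
  refine sum_congr rfl fun φ hφ => ?_
  rw [prod_insert hu, colorVec_congr fun e he => mem_agreeOff.1 hφ e fun heW => ?_]
  exact hu (mem_innerEdges.1 heW u (mem_incidentEdges.1 he))

theorem tncOn_update_of_forall_notMem {W : Finset V} {e : G.edgeSet}
    (he : ∀ v ∈ W, v ∉ (e : Sym2 V)) (ψ : G.edgeSet → Fin k) (c : Fin k) :
    tncOn G h W (Function.update ψ e c) = tncOn G h W ψ := by
  have heW : e ∉ innerEdges G W := fun heW =>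
    he _ (mem_innerEdges.1 heW _ (e : Sym2 V).out_fst_mem) (e : Sym2 V).out_fst_mem
  rw [tncOn, sum_agreeOff_update heW]
  refine sum_congr rfl fun φ _ => prod_congr rfl fun v hv => ?_
  refine congrArg _ (colorVec_congr fun e' he' => Function.update_of_ne ?_ _ _)
  rintro rfl
  exact he v hv (mem_incidentEdges.1 he')

theorem tncOn_insert_update {b : V} {W : Finset V} (hb : b ∉ W) {e : G.edgeSet}
    (he : ∀ v ∈ W, v ∉ (e : Sym2 V)) (hlink : e ∉ linkEdges G b W) (ψ : G.edgeSet → Fin k)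
    (c : Fin k) :
    tncOn G h (insert b W) (Function.update ψ e c) =
      ∑ ξ ∈ agreeOff (linkEdges G b W) ψ,
        h b (colorVec G (Function.update ξ e c) b) * tncOn G h W ξ := by
  rw [tncOn_insert G h hb, sum_agreeOff_update hlink]
  simp_rw [tncOn_update_of_forall_notMem G h he]

variable {G h}

theorem _root_.memS.norm_sub_lt {δ η : ℝ} (hmem : memS k G h δ η) (v : V)
    (φ φ' : G.edgeSet → Fin k) :
    ‖h v (colorVec G φ v) - h v (colorVec G φ' v)‖ < δ :=
  (hmem v _ _ (sum_colorVec G φ v) (sum_colorVec G φ' v)).1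

theorem _root_.memS.le_norm {δ η : ℝ} (hmem : memS k G h δ η) (v : V) (φ : G.edgeSet → Fin k) :
    η ≤ ‖h v (colorVec G φ v)‖ :=
  (hmem v _ _ (sum_colorVec G φ v) (sum_colorVec G φ v)).2

theorem _root_.memS.ne_zero {δ η : ℝ} (hmem : memS k G h δ η) (hη : 0 < η) (v : V)
    (φ : G.edgeSet → Fin k) : h v (colorVec G φ v) ≠ 0 :=
  norm_pos_iff.1 (hη.trans_le (hmem.le_norm v φ))

theorem _root_.memS.angle_le {δ η : ℝ} (hmem : memS k G h δ η) (hη : 0 < η) (hδη : δ ≤ η)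
    (v : V) (φ φ' : G.edgeSet → Fin k) :
    angle (h v (colorVec G φ v)) (h v (colorVec G φ' v)) ≤ arcsin (δ / η) := by
  have hlt := hmem.norm_sub_lt v φ φ'
  have hδ : 0 ≤ δ := (norm_nonneg _).trans hlt.le
  refine angle_le_arcsin_of_norm_sub_lt ?_ ((div_le_one hη).2 hδη)
  calc _ < δ := hlt
    _ = δ / η * η := by field_simp
    _ ≤ δ / η * ‖h v (colorVec G φ' v)‖ := by gcongr; exact hmem.le_norm v φ'

theorem cos_half_mul_sum_le_norm_sum_mul_tncOn {u : V} {W : Finset V} {ε θ w : ℝ}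
    (hθ : θ ∈ Set.Ico 0 (2 * π / 3)) (hw : 0 ≤ w)
    (hbudget : 1 ≤ maxDeg G → ε + maxDeg G * w ≤ θ) (hZ : ∀ ξ, tncOn G h W ξ ≠ 0)
    (hP : ∀ ξ, ∀ e ∉ innerEdges G W, ∀ c,
      angle (tncOn G h W ξ) (tncOn G h W (Function.update ξ e c)) ≤ w)
    {g : (G.edgeSet → Fin k) → ℂ} (hg : ∀ ξ, g ξ ≠ 0) (hgε : ∀ ξ ζ, angle (g ξ) (g ζ) ≤ ε)
    (ψ : G.edgeSet → Fin k) :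
    cos (θ / 2) * ∑ ξ ∈ agreeOff (linkEdges G u W) ψ, ‖g ξ‖ * ‖tncOn G h W ξ‖ ≤
      ‖∑ ξ ∈ agreeOff (linkEdges G u W) ψ, g ξ * tncOn G h W ξ‖ := by
  refine cos_half_mul_sum_le_norm_sum_mul _ ψ hθ hZ hg
    (fun ξ e he c => hP ξ e (mem_sdiff.1 he).2 c) hgε fun hL => ?_
  have hcard : #(linkEdges G u W) ≤ maxDeg G :=
    (card_le_card (linkEdges_subset_incidentEdges G u W)).trans
      ((card_incidentEdges G u).trans_le (deg_le_maxDeg G u))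
  have hΔ : ((#(linkEdges G u W) : ℕ) : ℝ) ≤ maxDeg G := by exact_mod_cast hcard
  have := hbudget (hL.card_pos.trans_le hcard)
  nlinarith

theorem le_norm_tncOn_insert {u : V} {W : Finset V} (hu : u ∉ W) {δ η θ w : ℝ}
    (hmem : memS k G h δ η) (hη : 0 < η) (hδη : δ ≤ η) (hθ : θ ∈ Set.Ico 0 (2 * π / 3))
    (hw : 0 ≤ w) (hbudget : 1 ≤ maxDeg G → arcsin (δ / η) + maxDeg G * w ≤ θ)
    (hB : ∀ ξ, (cos (θ / 2) * η) ^ #W * (k : ℝ) ^ #(innerEdges G W) ≤ ‖tncOn G h W ξ‖)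
    (hZ : ∀ ξ, tncOn G h W ξ ≠ 0)
    (hP : ∀ ξ, ∀ e ∉ innerEdges G W, ∀ c,
      angle (tncOn G h W ξ) (tncOn G h W (Function.update ξ e c)) ≤ w)
    (ψ : G.edgeSet → Fin k) :
    (cos (θ / 2) * η) ^ #(insert u W) * (k : ℝ) ^ #(innerEdges G (insert u W)) ≤
      ‖tncOn G h (insert u W) ψ‖ := by
  have hc : 0 ≤ cos (θ / 2) := cos_nonneg_of_mem_Icc ⟨by linarith [pi_pos, hθ.1], by
    linarith [pi_pos, hθ.2]⟩
  set L := linkEdges G u W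
  set bound := (cos (θ / 2) * η) ^ #W * (k : ℝ) ^ #(innerEdges G W)
  have hcard : #(innerEdges G (insert u W)) = #(innerEdges G W) + #L := by
    rw [innerEdges_insert, card_union_of_disjoint (disjoint_linkEdges G u W)]
  rw [card_insert_of_notMem hu, hcard, tncOn_insert G h hu]
  calc (cos (θ / 2) * η) ^ (#W + 1) * (k : ℝ) ^ (#(innerEdges G W) + #L)
      = cos (θ / 2) * ∑ _ξ ∈ agreeOff L ψ, η * bound := by
        rw [sum_const, card_agreeOff, Fintype.card_fin, nsmul_eq_mul]
        push_cast
        ring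
    _ ≤ cos (θ / 2) * ∑ ξ ∈ agreeOff L ψ, ‖h u (colorVec G ξ u)‖ * ‖tncOn G h W ξ‖ := by
        gcongr with ξ
        exacts [hmem.le_norm u ξ, hB ξ]
    _ ≤ _ := cos_half_mul_sum_le_norm_sum_mul_tncOn hθ hw hbudget hZ hP (hmem.ne_zero hη u)
        (hmem.angle_le hη hδη u) ψ

theorem angle_tncOn_insert_update_le {b : V} {W : Finset V} (hb : b ∉ W) {e : G.edgeSet}
    (hbe : b ∈ (e : Sym2 V)) (he : e ∉ innerEdges G (insert b W)) {δ η θ w : ℝ}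
    (hmem : memS k G h δ η) (hη : 0 < η) (hδ : 0 ≤ δ) (hδη : δ ≤ η)
    (hθ : θ ∈ Set.Ico 0 (2 * π / 3)) (hw : arcsin (δ / η) ≤ w)
    (hw₂ : 2 ≤ maxDeg G → δ ≤ cos (θ / 2) * η ∧ arcsin (δ / (cos (θ / 2) * η)) ≤ w)
    (hbudget : 1 ≤ maxDeg G → arcsin (δ / η) + maxDeg G * w ≤ θ)
    (hZ : ∀ ξ, tncOn G h W ξ ≠ 0)
    (hP : ∀ ξ, ∀ e ∉ innerEdges G W, ∀ c,
      angle (tncOn G h W ξ) (tncOn G h W (Function.update ξ e c)) ≤ w)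
    (ψ : G.edgeSet → Fin k) (c : Fin k) :
    angle (tncOn G h (insert b W) ψ) (tncOn G h (insert b W) (Function.update ψ e c)) ≤ w := by
  have hoff := forall_notMem_of_notMem_innerEdges_insert G hb hbe he
  have hlink : e ∉ linkEdges G b W := fun he' => he (mem_sdiff.1 he').1
  rw [tncOn_insert G h hb, tncOn_insert_update G h hb hoff hlink]
  set L := linkEdges G b W
  set S := ∑ ξ ∈ agreeOff L ψ, ‖tncOn G h W ξ‖
  have hsub := norm_sum_mul_sub_sum_mul_lt (s := agreeOff L ψ) ⟨ψ, self_mem_agreeOff⟩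
    (fun ξ _ => hmem.norm_sub_lt b ξ (Function.update ξ e c)) fun ξ _ => hZ ξ
  suffices ∃ γ > 0, δ ≤ γ * η ∧ arcsin (δ / (γ * η)) ≤ w ∧ γ * η * S ≤
      ‖∑ ξ ∈ agreeOff L ψ, h b (colorVec G (Function.update ξ e c) b) * tncOn G h W ξ‖ by
    obtain ⟨γ, hγ, hδγ, hγw, hlow⟩ := this
    exact (angle_le_arcsin_div_of_norm_sub_lt hsub hlow (by positivity) hδ hδγ).trans hγw
  rcases L.eq_empty_or_nonempty with hL | hL
  · refine ⟨1, one_pos, by simpa using hδη, by simpa using hw, ?_⟩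
    simp only [S, hL, agreeOff_empty, sum_singleton, one_mul, norm_mul]
    exact mul_le_mul_of_nonneg_right (hmem.le_norm b _) (norm_nonneg _)
  obtain ⟨hδc, hwc⟩ := hw₂ (two_le_maxDeg_of_linkEdges_nonempty G hbe hlink hL)
  have hc : 0 < cos (θ / 2) :=
    cos_pos_of_mem_Ioo ⟨by linarith [pi_pos, hθ.1], by linarith [pi_pos, hθ.2]⟩
  refine ⟨cos (θ / 2), hc, hδc, hwc, ?_⟩
  calc cos (θ / 2) * η * S = cos (θ / 2) * ∑ ξ ∈ agreeOff L ψ, η * ‖tncOn G h W ξ‖ := by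
        rw [mul_assoc, mul_sum]
    _ ≤ cos (θ / 2) * ∑ ξ ∈ agreeOff L ψ,
          ‖h b (colorVec G (Function.update ξ e c) b)‖ * ‖tncOn G h W ξ‖ := by
        gcongr with ξ
        exact hmem.le_norm b _
    _ ≤ _ := cos_half_mul_sum_le_norm_sum_mul_tncOn hθ
        ((arcsin_nonneg.2 (div_nonneg hδ hη.le)).trans hw) hbudget hZ hP
        (fun _ => hmem.ne_zero hη b _) (fun _ _ => hmem.angle_le hη hδη b _ _) ψ

theorem tncOn_bounds (hk : 0 < k) {δ η θ w : ℝ} (hmem : memS k G h δ η) (hη : 0 < η)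
    (hδ : 0 ≤ δ) (hδη : δ ≤ η) (hθ : θ ∈ Set.Ico 0 (2 * π / 3)) (hw : arcsin (δ / η) ≤ w)
    (hw₂ : 2 ≤ maxDeg G → δ ≤ cos (θ / 2) * η ∧ arcsin (δ / (cos (θ / 2) * η)) ≤ w)
    (hbudget : 1 ≤ maxDeg G → arcsin (δ / η) + maxDeg G * w ≤ θ) (W : Finset V) :
    (∀ ψ, (cos (θ / 2) * η) ^ #W * (k : ℝ) ^ #(innerEdges G W) ≤ ‖tncOn G h W ψ‖) ∧
      ∀ ψ, ∀ e ∉ innerEdges G W, ∀ c,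
        angle (tncOn G h W ψ) (tncOn G h W (Function.update ψ e c)) ≤ w := by
  have hc : 0 < cos (θ / 2) :=
    cos_pos_of_mem_Ioo ⟨by linarith [pi_pos, hθ.1], by linarith [pi_pos, hθ.2]⟩
  have hk' : (0 : ℝ) < k := by exact_mod_cast hk
  have hw0 : 0 ≤ w := (arcsin_nonneg.2 (div_nonneg hδ hη.le)).trans hw
  have hpos : ∀ W' : Finset V, 0 < (cos (θ / 2) * η) ^ #W' * (k : ℝ) ^ #(innerEdges G W') :=
    fun _ => by positivity
  induction W using Finset.strongInduction with
  | H W ih =>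
  have hZ : ∀ W' ⊂ W, ∀ ξ, tncOn G h W' ξ ≠ 0 := fun W' hW' ξ =>
    norm_pos_iff.1 ((hpos W').trans_le ((ih W' hW').1 ξ))
  have hB : ∀ ψ, (cos (θ / 2) * η) ^ #W * (k : ℝ) ^ #(innerEdges G W) ≤ ‖tncOn G h W ψ‖ := by
    intro ψ
    rcases W.eq_empty_or_nonempty with rfl | ⟨u, hu⟩
    · simp [tncOn_empty, innerEdges_empty]
    obtain ⟨W', hW', rfl⟩ : ∃ W', u ∉ W' ∧ W = insert u W' :=
      ⟨W.erase u, notMem_erase u W, (insert_erase hu).symm⟩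
    have hsub := ssubset_insert hW'
    exact le_norm_tncOn_insert hW' hmem hη hδη hθ hw0 hbudget (ih W' hsub).1 (hZ W' hsub)
      (ih W' hsub).2 ψ
  refine ⟨hB, fun ψ e he c => ?_⟩
  by_cases hWe : ∃ b ∈ W, b ∈ (e : Sym2 V)
  · obtain ⟨b, hbW, hbe⟩ := hWe
    obtain ⟨W', hW', rfl⟩ : ∃ W', b ∉ W' ∧ W = insert b W' :=
      ⟨W.erase b, notMem_erase b W, (insert_erase hbW).symm⟩
    have hsub := ssubset_insert hW'
    exact angle_tncOn_insert_update_le hW' hbe he hmem hη hδ hδη hθ hw hw₂ hbudget (hZ W' hsub)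
      (ih W' hsub).2 ψ c
  · push Not at hWe
    rw [tncOn_update_of_forall_notMem G h hWe,
      angle_self (norm_pos_iff.1 ((hpos W).trans_le (hB ψ)))]
    exact hw0

end TensorNetwork

theorem stmt1_general (k : ℕ) (hk : 2 ≤ k) (G : SimpleGraph V) (η θ β δ : ℝ)
    (hη : 0 < η) (hθ : θ ∈ Set.Ioo 0 (2 * Real.pi / 3))
    (hβ0 : 0 < β) (hβ : β ≤ η * θ * Real.cos (θ / 2))
    (hδ : δ = min η (β / (maxDeg G + 1 : ℝ)))
    (h : V → (Fin k → ℕ) → ℂ) (hmem : memS k G h δ η) :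
    (Real.cos (θ / 2) * η) ^ (Fintype.card V) * (k : ℝ) ^ (Nat.card G.edgeSet)
        ≤ ‖tnc k G h‖ ∧ tnc k G h ≠ 0 := by
  have := Fintype.ofFinite G.edgeSet
  have hθ' : θ ∈ Set.Ico 0 (2 * π / 3) := ⟨hθ.1.le, hθ.2⟩
  have hδ0 : 0 < δ := hδ ▸ lt_min hη (by positivity)
  have hδη : δ ≤ η := hδ ▸ min_le_left _ _
  have hδθ : δ * (maxDeg G + 1) ≤ η * θ * cos (θ / 2) :=
    calc δ * (maxDeg G + 1) ≤ β / (maxDeg G + 1) * (maxDeg G + 1) := by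
          gcongr
          exact hδ ▸ min_le_right _ _
      _ = β := div_mul_cancel₀ _ (by positivity)
      _ ≤ _ := hβ
  obtain ⟨w, hw, hw₂, hbudget⟩ := exists_angle_budget hη hθ' hδ0.le hδθ
  have hbound := (TensorNetwork.tncOn_bounds (by omega) hmem hη hδ0.le hδη hθ' hw hw₂ hbudget
    univ).1 fun _ => ⟨0, by omega⟩
  rw [← TensorNetwork.tnc_eq_tncOn_univ, TensorNetwork.innerEdges_univ, card_univ,
    card_univ] at hbound
  rw [Nat.card_eq_fintype_card]
  refine ⟨hbound, fun h0 => ?_⟩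
  have hc : 0 < cos (θ / 2) :=
    cos_pos_of_mem_Ioo ⟨by linarith [pi_pos, hθ.1], by linarith [pi_pos, hθ.2]⟩
  have hk' : (0 : ℝ) < k := by exact_mod_cast (by omega : 0 < k)
  rw [h0, norm_zero] at hbound
  exact hbound.not_gt (by positivity)

/-- zero-free region for tensor network contractions:
for `h ∈ S_G(δ,η)` with `δ = min{η, β/(Δ(G)+1)} < 1`,
`0 < β ≤ η·θ·cos(θ/2)` and `θ ∈ (0,2π/3)`, one has
`|p(G)(h)| ≥ (cos(θ/2)·η)^{|V|} · k^{|E|}`; in particular `p(G)(h) ≠ 0`. -/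
theorem stmt1 (k : ℕ) (hk : 2 ≤ k) (G : SimpleGraph V) (η θ β δ : ℝ)
    (hη : 0 < η) (hθ : θ ∈ Set.Ioo 0 (2 * Real.pi / 3))
    (hβ0 : 0 < β) (hβ : β ≤ η * θ * Real.cos (θ / 2))
    (hδ : δ = min η (β / (maxDeg G + 1 : ℝ))) (hδ1 : δ < 1)
    (h : V → (Fin k → ℕ) → ℂ) (hmem : memS k G h δ η) :
    (Real.cos (θ / 2) * η) ^ (Fintype.card V) * (k : ℝ) ^ (Nat.card G.edgeSet)
        ≤ ‖tnc k G h‖ ∧ tnc k G h ≠ 0 :=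
  stmt1_general k hk G η θ β δ hη hθ hβ0 hβ hδ h hmem
end
end

section
/- Fix Δ ∈ ℕ and x ∈ ℂ^k with (x,x) := Σ_{i=1}^k x_i² ≠ 0. Then there exists δ > 0, depending only on x, k and Δ, with the following property: for every finite simple graph G = (V,E) with maximum degree at most Δ, every choice of nonzero a_v ∈ ℂ (v ∈ V), and every tensor network h = (h^v) satisfying |h^v(α) − a_v·Π_{j=1}^k x_j^{α_j}| ≤ |a_v| · |(x,x)/k|^{deg(v)/2} · δ/(2(Δ(G)+1)) for all v ∈ V and all α ∈ ℕ^k with |α| = deg(v), one has p(G)(h) ≠ 0. -/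
/-!
A network whose tensors are all close to the all-ones tensor has non-zero contraction,
uniformly in the size of the graph. By induction on the number of edges one proves at the same
time that the contraction is non-zero and that changing the tensor at one vertex changes it by a
relative error of at most `θ`. For the induction step fix the colours `ψ` of the edges at a
vertex `v`: the contraction becomes `∑ ψ, h v (colorCount ψ) * r ψ`, where the `r ψ` are
contractions of a network with fewer edges that differ only at the at most `2Δ` other ends of
those edges, so by stability they lie within a factor `(1 + θ) ^ (2Δ) ≤ 4/3` of each other and
the sum cannot vanish.

The contraction does not change when every tensor is transformed by a complex orthogonal matrix
`U` (the relation `Uᵀ * U = 1` glues the two ends of each edge back together), and it is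
multiplied by `∏ v, a v` when the tensor at `v` is multiplied by `a v`. Taking `U` with
`U *ᵥ x = (c, …, c)`, where `c ^ 2 = (x, x) / k`, and rescaling the tensor at `v` by
`(a v * c ^ deg v)⁻¹` turns a network close to `v ↦ a v • x ^ ⊗ deg v` into one close to the
all-ones tensor.
-/

noncomputable section

variable {V : Type} [Fintype V] [DecidableEq V]

open Finset Matrix

namespace TensorNetwork

section ColorCount

variable {k : ℕ} {H H' : Type}

def colorCount (g : H → Fin k) (j : Fin k) : ℕ := Nat.card {x // g x = j}

lemma colorCount_comp_equiv (e : H' ≃ H) (g : H → Fin k) : colorCount (g ∘ e) = colorCount g :=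
  funext fun _ => Nat.card_congr (e.subtypeEquiv fun _ => Iff.rfl)

lemma colorCount_sigma_fst (α : Fin k → ℕ) :
    colorCount (Sigma.fst : (Σ j, Fin (α j)) → Fin k) = α :=
  funext fun j => by
    rw [colorCount, Nat.card_congr (Equiv.sigmaSubtype j), Nat.card_eq_fintype_card,
      Fintype.card_fin]

lemma sum_colorCount [Finite H] (g : H → Fin k) : ∑ j, colorCount g j = Nat.card H := by
  rw [← Nat.card_congr (Equiv.sigmaFiberEquiv g), Nat.card_sigma]
  rfl

lemma prod_pow_colorCount [Fintype H] {M : Type*} [CommMonoid M] (g : H → Fin k)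
    (f : Fin k → M) : ∏ j, f j ^ colorCount g j = ∏ x, f (g x) := by
  rw [← Fintype.prod_fiberwise g]
  refine Fintype.prod_congr _ _ fun j => ?_
  rw [Fintype.prod_congr _ (fun _ => f j) fun x => by rw [x.2], prod_const, card_univ,
    colorCount, Nat.card_eq_fintype_card]

def subtypeSubtypeComm (p q : H → Prop) : {x : Subtype p // q x} ≃ {x : Subtype q // p x} where
  toFun x := ⟨⟨x.1, x.2⟩, x.1.2⟩
  invFun x := ⟨⟨x.1, x.2⟩, x.1.2⟩
  left_inv _ := rfl
  right_inv _ := rfl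

lemma card_subtype_eq_add [Finite H] (p q : H → Prop) :
    Nat.card {x // q x} =
      Nat.card {x : {x // q x} // p x} + Nat.card {x : {x // q x} // ¬p x} := by
  classical
  rw [← Nat.card_sum]
  exact Nat.card_congr (Equiv.sumCompl fun x : {x // q x} => p x).symm

lemma colorCount_eq_add [Finite H] (g : H → Fin k) (p : H → Prop) :
    colorCount g =
      colorCount (fun x : {x // p x} => g x) + colorCount (fun x : {x // ¬p x} => g x) :=
  funext fun j => by
    rw [Pi.add_apply, colorCount, card_subtype_eq_add p]
    exact congrArg₂ (· + ·) (Nat.card_congr (subtypeSubtypeComm (fun x => g x = j) p))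
      (Nat.card_congr (subtypeSubtypeComm (fun x => g x = j) fun x => ¬p x))

end ColorCount

lemma prod_sum_fiberwise {R : Type*} [CommSemiring R] {D ι κ : Type*} [Fintype D]
    [DecidableEq D] [Fintype ι] [DecidableEq ι] [Fintype κ] (p : D → ι)
    (F : ∀ i, ({d // p d = i} → κ) → R) :
    ∏ i, ∑ g : {d // p d = i} → κ, F i g = ∑ c : D → κ, ∏ i, F i fun d => c d := by
  rw [Fintype.prod_sum]
  symm
  exact Fintype.sum_equiv ((Equiv.arrowCongr (Equiv.sigmaFiberEquiv p).symm (Equiv.refl κ)).trans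
    (Equiv.piCurry fun _ _ => κ)) _ _ fun _ => rfl

section SumEstimates

variable {ι : Type*} [Fintype ι] {a b r : ι → ℂ} {i₀ : ι}

lemma norm_le_of_norm_sub_le_div_three {z z₀ : ℂ} (h : ‖z - z₀‖ ≤ ‖z₀‖ / 3) :
    ‖z‖ ≤ 4 / 3 * ‖z₀‖ := by
  have := norm_le_norm_add_norm_sub' z z₀
  linarith

lemma le_norm_sum_mul (ha : ∀ i, ‖a i - 1‖ ≤ 1 / 8) (hr : ∀ i, ‖r i - r i₀‖ ≤ ‖r i₀‖ / 3) :
    Fintype.card ι * ‖r i₀‖ / 2 ≤ ‖∑ i, a i * r i‖ := by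
  have hterm (i : ι) : ‖a i * r i - r i₀‖ ≤ ‖r i₀‖ / 2 := by
    calc ‖a i * r i - r i₀‖ = ‖(a i - 1) * r i + (r i - r i₀)‖ := by ring_nf
      _ ≤ ‖a i - 1‖ * ‖r i‖ + ‖r i - r i₀‖ := (norm_add_le _ _).trans_eq (by rw [norm_mul])
      _ ≤ 1 / 8 * (4 / 3 * ‖r i₀‖) + ‖r i₀‖ / 3 := by
          gcongr
          exacts [ha i, norm_le_of_norm_sub_le_div_three (hr i), hr i]
      _ = ‖r i₀‖ / 2 := by ring
  have hsum : ‖∑ i, a i * r i - Fintype.card ι * r i₀‖ ≤ Fintype.card ι * (‖r i₀‖ / 2) := by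
    rw [← nsmul_eq_mul, ← card_univ, ← sum_const, ← sum_sub_distrib]
    exact (norm_sum_le _ _).trans ((sum_le_sum fun i _ => hterm i).trans_eq (by simp))
  have := norm_sub_norm_le (Fintype.card ι * r i₀) (∑ i, a i * r i)
  rw [norm_sub_rev, norm_mul, Complex.norm_natCast] at this
  linarith

lemma norm_sum_mul_sub_sum_mul_le {δ : ℝ} (ha : ∀ i, ‖a i - 1‖ ≤ δ) (hb : ∀ i, ‖b i - 1‖ ≤ δ)
    (hr : ∀ i, ‖r i - r i₀‖ ≤ ‖r i₀‖ / 3) :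
    ‖∑ i, b i * r i - ∑ i, a i * r i‖ ≤ Fintype.card ι * (8 / 3 * δ * ‖r i₀‖) := by
  have hterm (i : ι) : ‖b i * r i - a i * r i‖ ≤ 8 / 3 * δ * ‖r i₀‖ := by
    have hba : ‖b i - a i‖ ≤ 2 * δ := by
      have := norm_sub_le (b i - 1) (a i - 1)
      rw [sub_sub_sub_cancel_right] at this
      linarith [ha i, hb i]
    calc ‖b i * r i - a i * r i‖ = ‖b i - a i‖ * ‖r i‖ := by rw [← sub_mul, norm_mul]
      _ ≤ 2 * δ * (4 / 3 * ‖r i₀‖) :=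
          mul_le_mul hba (norm_le_of_norm_sub_le_div_three (hr i)) (norm_nonneg _)
            ((norm_nonneg _).trans hba)
      _ = 8 / 3 * δ * ‖r i₀‖ := by ring
  rw [← sum_sub_distrib]
  exact (norm_sum_le _ _).trans ((sum_le_sum fun i _ => hterm i).trans_eq (by simp))

end SumEstimates

lemma exists_one_add_pow_le (Δ : ℕ) : ∃ θ : ℝ, 0 < θ ∧ θ ≤ 1 ∧ (1 + θ) ^ (2 * Δ) ≤ 4 / 3 := by
  refine ⟨1 / (8 * (Δ + 1)), by positivity, ?_, ?_⟩
  · rw [div_le_one (by positivity)]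
    linarith [(Nat.cast_nonneg Δ : (0 : ℝ) ≤ Δ)]
  have h2Δθ : (2 * Δ : ℕ) * (1 / (8 * (Δ + 1)) : ℝ) ≤ 1 / 4 := by
    rw [mul_one_div, div_le_iff₀ (by positivity)]
    push_cast
    linarith
  calc (1 + 1 / (8 * (Δ + 1) : ℝ)) ^ (2 * Δ) ≤ Real.exp (1 / (8 * (Δ + 1))) ^ (2 * Δ) := by
        gcongr
        linarith [Real.add_one_le_exp (1 / (8 * (Δ + 1) : ℝ))]
    _ = Real.exp ((2 * Δ : ℕ) * (1 / (8 * (Δ + 1)))) := (Real.exp_nat_mul _ _).symm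
    _ ≤ Real.exp (1 / 4) := Real.exp_le_exp.mpr h2Δθ
    _ ≤ 1 / (1 - 1 / 4) :=
        (Real.exp_bound_div_one_sub_of_interval' (by norm_num) (by norm_num)).le
    _ = 4 / 3 := by norm_num

section Reflection

variable {K : Type*} [Field K] {n : Type*} [Fintype n] [DecidableEq n]

/-- The reflection in the hyperplane orthogonal to `w` for the bilinear form `⬝ᵥ`. -/
def reflection (w : n → K) : Matrix n n K := 1 - (2 / (w ⬝ᵥ w)) • vecMulVec w w

lemma transpose_reflection_mul_self {w : n → K} (hw : w ⬝ᵥ w ≠ 0) :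
    (reflection w)ᵀ * reflection w = 1 := by
  have hP : vecMulVec w w * vecMulVec w w = (w ⬝ᵥ w) • vecMulVec w w := by
    rw [vecMulVec_mul_vecMulVec]
    ext i j
    simp [vecMulVec_apply, mul_left_comm]
  simp only [reflection, transpose_sub, transpose_one, transpose_smul, transpose_vecMulVec,
    sub_mul, mul_sub, one_mul, mul_one, smul_mul_smul_comm, hP, smul_smul]
  rw [sub_sub, sub_eq_self, ← add_sub_assoc, ← add_smul, ← sub_smul]
  have hscalar : 2 / (w ⬝ᵥ w) + 2 / (w ⬝ᵥ w) - 2 / (w ⬝ᵥ w) * (2 / (w ⬝ᵥ w)) * (w ⬝ᵥ w) = 0 := by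
    field_simp
    ring
  rw [hscalar, zero_smul]

lemma reflection_mulVec (w y : n → K) :
    reflection w *ᵥ y = y - (2 * (w ⬝ᵥ y) / (w ⬝ᵥ w)) • w := by
  simp only [reflection, sub_mulVec, one_mulVec, smul_mulVec, vecMulVec_mulVec, op_smul_eq_smul,
    smul_smul, mul_div_right_comm]

/-- Reflect in `x - z`; if that vector is isotropic, reflect in `x + z` and change sign. -/
lemma exists_transpose_mul_eq_one_mulVec_eq [NeZero (2 : K)] {x z : n → K}
    (hxz : x ⬝ᵥ x = z ⬝ᵥ z) (hx : x ⬝ᵥ x ≠ 0) :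
    ∃ U : Matrix n n K, Uᵀ * U = 1 ∧ U *ᵥ x = z := by
  have h2 : (2 : K) ≠ 0 := two_ne_zero
  by_cases hw : (x - z) ⬝ᵥ (x - z) = 0
  · have hzx : z ⬝ᵥ x = x ⬝ᵥ x := by
      simp only [sub_dotProduct, dotProduct_sub, dotProduct_comm x z, ← hxz] at hw
      exact mul_left_cancel₀ h2 (by linear_combination (-1 : K) * hw)
    have hw' : (x + z) ⬝ᵥ (x + z) = 2 * (2 * (x ⬝ᵥ x)) := by
      simp only [add_dotProduct, dotProduct_add, dotProduct_comm x z, ← hxz, hzx]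
      ring
    have hw'0 : (x + z) ⬝ᵥ (x + z) ≠ 0 := by
      rw [hw']
      exact mul_ne_zero h2 (mul_ne_zero h2 hx)
    refine ⟨-reflection (x + z), by simpa using transpose_reflection_mul_self hw'0, ?_⟩
    rw [neg_mulVec, reflection_mulVec, hw', add_dotProduct, hzx, ← two_mul,
      mul_div_mul_left _ _ h2, div_self (mul_ne_zero h2 hx), one_smul]
    abel
  · refine ⟨reflection (x - z), transpose_reflection_mul_self hw, ?_⟩
    have hw' : (x - z) ⬝ᵥ (x - z) = 2 * ((x - z) ⬝ᵥ x) := by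
      simp only [sub_dotProduct, dotProduct_sub, dotProduct_comm x z, ← hxz]
      ring
    have hwx : (x - z) ⬝ᵥ x ≠ 0 := fun h => hw (by rw [hw', h, mul_zero])
    rw [reflection_mulVec, hw', mul_div_mul_left _ _ h2, div_self hwx, one_smul, sub_sub_cancel]

end Reflection

section Transform

variable {k : ℕ} {R : Type*} [CommSemiring R]

/-- The action of `U ^ ⊗|α|` on a symmetric tensor `f` indexed by colour multiplicities: the
sum runs over the recolourings `g` of a set with `α j` points of colour `j`. -/
def transform (U : Matrix (Fin k) (Fin k) R) (f : (Fin k → ℕ) → R) (α : Fin k → ℕ) : R :=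
  ∑ g : (Σ j, Fin (α j)) → Fin k, f (colorCount g) * ∏ y, U y.1 (g y)

lemma transform_eq_sum {H : Type} [Fintype H] [DecidableEq H] (U : Matrix (Fin k) (Fin k) R)
    (f : (Fin k → ℕ) → R) (l : H → Fin k) :
    transform U f (colorCount l) = ∑ g : H → Fin k, f (colorCount g) * ∏ x, U (l x) (g x) := by
  let e : (Σ j, Fin (colorCount l j)) ≃ H :=
    (Equiv.sigmaCongrRight fun j => (Finite.equivFin {x // l x = j}).symm).trans
      (Equiv.sigmaFiberEquiv l)
  have he (y : Σ j, Fin (colorCount l j)) : l (e y) = y.1 :=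
    ((Finite.equivFin {x // l x = y.1}).symm y.2).2
  rw [transform, ← (e.arrowCongr (Equiv.refl (Fin k))).symm.sum_comp]
  refine sum_congr rfl fun g _ => ?_
  change f (colorCount (g ∘ e)) * ∏ y, U y.1 (g (e y)) = _
  rw [colorCount_comp_equiv, ← e.prod_comp]
  simp only [he]

lemma transform_add (U : Matrix (Fin k) (Fin k) R) (f f' : (Fin k → ℕ) → R) (α : Fin k → ℕ) :
    transform U (f + f') α = transform U f α + transform U f' α := by
  simp only [transform, Pi.add_apply, add_mul, sum_add_distrib]

lemma transform_rankOne (U : Matrix (Fin k) (Fin k) R) (a : R) (x : Fin k → R)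
    (α : Fin k → ℕ) : transform U (fun β => a * ∏ j, x j ^ β j) α = a * ∏ j, (U *ᵥ x) j ^ α j := by
  simp only [transform, prod_pow_colorCount, mul_assoc, ← mul_sum, ← prod_mul_distrib]
  calc a * ∑ g : (Σ j, Fin (α j)) → Fin k, ∏ y, x (g y) * U y.1 (g y)
      = a * ∏ y : (Σ j, Fin (α j)), ∑ l, x l * U y.1 l := by rw [Fintype.prod_sum]
    _ = a * ∏ y : (Σ j, Fin (α j)), (U *ᵥ x) y.1 := by simp only [mulVec, dotProduct, mul_comm]
    _ = a * ∏ j, (U *ᵥ x) j ^ α j := by rw [← prod_pow_colorCount, colorCount_sigma_fst]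

lemma sum_prod_mul_eq_ite {E : Type*} [Fintype E] [DecidableEq E]
    {U : Matrix (Fin k) (Fin k) R} (hU : Uᵀ * U = 1) (a b : E → Fin k) :
    ∑ ℓ : E → Fin k, ∏ e, U (ℓ e) (a e) * U (ℓ e) (b e) = if a = b then 1 else 0 := by
  have horth (i j : Fin k) : ∑ l, U l i * U l j = if i = j then 1 else 0 := by
    rw [← Matrix.one_apply, ← hU, Matrix.mul_apply]
    rfl
  rw [← (Fintype.prod_sum fun e l => U l (a e) * U l (b e))]
  simp only [horth, Fintype.prod_boole, funext_iff]

end Transform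

lemma norm_transform_le {k : ℕ} (U : Matrix (Fin k) (Fin k) ℂ) {M ε : ℝ}
    (hU : ∀ i j, ‖U i j‖ ≤ M) (f : (Fin k → ℕ) → ℂ) (α : Fin k → ℕ)
    (hf : ∀ β, ∑ j, β j = ∑ j, α j → ‖f β‖ ≤ ε) :
    ‖transform U f α‖ ≤ (k * M) ^ (∑ j, α j) * ε := by
  have hcard : Fintype.card (Σ j, Fin (α j)) = ∑ j, α j := by simp
  have hε : 0 ≤ ε := (norm_nonneg _).trans (hf α rfl)
  have hterm (g : (Σ j, Fin (α j)) → Fin k) :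
      ‖f (colorCount g) * ∏ y, U y.1 (g y)‖ ≤ ε * M ^ (∑ j, α j) := by
    rw [norm_mul, norm_prod, ← hcard, ← card_univ, ← prod_const]
    gcongr with y
    · exact hf _ (by rw [sum_colorCount, Nat.card_eq_fintype_card, hcard])
    · exact hU _ _
  refine (norm_sum_le _ _).trans ((sum_le_sum fun g _ => hterm g).trans_eq ?_)
  rw [sum_const, card_univ, Fintype.card_fun, hcard, Fintype.card_fin, nsmul_eq_mul]
  push_cast
  ring

/-- Unlike `SimpleGraph`, this lets us delete edges by passing to a subtype of `Edge`, and it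
names the two ends of every edge, which the orthogonal invariance needs. Loops are allowed. -/
structure Multigraph (V : Type) where
  Edge : Type
  [fintypeEdge : Fintype Edge]
  [decidableEqEdge : DecidableEq Edge]
  fst : Edge → V
  snd : Edge → V

namespace Multigraph

attribute [instance] fintypeEdge decidableEqEdge

variable {V : Type} (N : Multigraph V) {k : ℕ}

def Incident (v : V) (e : N.Edge) : Prop := N.fst e = v ∨ N.snd e = v

instance [DecidableEq V] (v : V) : DecidablePred (N.Incident v) :=
  fun _ => instDecidableOr

abbrev EdgesAt (v : V) : Type := {e : N.Edge // N.Incident v e}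

def degree (v : V) : ℕ := Nat.card (N.EdgesAt v)

def colorsAt (φ : N.Edge → Fin k) (v : V) : Fin k → ℕ := colorCount fun e : N.EdgesAt v => φ e

lemma sum_colorsAt (φ : N.Edge → Fin k) (v : V) : ∑ j, N.colorsAt φ v j = N.degree v :=
  sum_colorCount _

def contract {R : Type*} [CommSemiring R] [Fintype V] (h : V → (Fin k → ℕ) → R) : R :=
  ∑ φ : N.Edge → Fin k, ∏ v, h v (N.colorsAt φ v)

lemma contract_mul {R : Type*} [CommSemiring R] [Fintype V] (c : V → R)
    (h : V → (Fin k → ℕ) → R) :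
    N.contract (fun v α => c v * h v α) = (∏ v, c v) * N.contract h := by
  simp only [contract, prod_mul_distrib, mul_sum]

def IsNearOne (δ : ℝ) (h : V → (Fin k → ℕ) → ℂ) : Prop :=
  ∀ v α, ∑ j, α j = N.degree v → ‖h v α - 1‖ ≤ δ

section Deletion

variable (v : V)

def pinnedColors (ψ : N.EdgesAt v → Fin k) (u : V) : Fin k → ℕ :=
  colorCount fun f : {f : N.EdgesAt v // N.Incident u f} => ψ f

lemma pinnedColors_self (ψ : N.EdgesAt v → Fin k) : N.pinnedColors v ψ v = colorCount ψ :=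
  colorCount_comp_equiv (Equiv.subtypeUnivEquiv fun f : N.EdgesAt v => f.2) ψ

variable [DecidableEq V]

abbrev deleteEdgesAt : Multigraph V where
  Edge := {e : N.Edge // ¬N.Incident v e}
  fst e := N.fst e
  snd e := N.snd e

/-- The tensors of `N.deleteEdgesAt v` obtained by fixing the colours `ψ` of the edges at `v`:
the now isolated vertex `v` carries the constant `1`, and every other vertex `u` adds the
colours that `ψ` puts on its edges to `v`. -/
def pin {R : Type*} [One R] (ψ : N.EdgesAt v → Fin k) (h : V → (Fin k → ℕ) → R) :
    V → (Fin k → ℕ) → R :=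
  fun u => if u = v then fun _ => 1 else fun α => h u (α + N.pinnedColors v ψ u)

lemma degree_eq_add (u : V) :
    N.degree u = Nat.card {f : N.EdgesAt v // N.Incident u f} + (N.deleteEdgesAt v).degree u := by
  rw [degree, card_subtype_eq_add (N.Incident v)]
  exact congrArg₂ (· + ·) (Nat.card_congr (subtypeSubtypeComm (N.Incident u) (N.Incident v)))
    (Nat.card_congr (subtypeSubtypeComm (N.Incident u) fun e => ¬N.Incident v e))

lemma degree_deleteEdgesAt_le (u : V) : (N.deleteEdgesAt v).degree u ≤ N.degree u := by
  rw [N.degree_eq_add v u]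
  omega

lemma card_edge_deleteEdgesAt_lt (hv : 0 < N.degree v) :
    Nat.card (N.deleteEdgesAt v).Edge < Nat.card N.Edge := by
  obtain ⟨e, he⟩ := (Nat.card_pos_iff.mp hv).1
  exact Finite.card_subtype_lt (not_not_intro he)

lemma colorsAt_eq_add (φ : N.Edge → Fin k) (u : V) :
    N.colorsAt φ u =
      N.pinnedColors v (fun f => φ f) u + (N.deleteEdgesAt v).colorsAt (fun e => φ e.1) u := by
  rw [colorsAt, colorCount_eq_add _ fun e : N.EdgesAt u => N.Incident v e]
  exact congrArg₂ (· + ·)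
    (colorCount_comp_equiv (subtypeSubtypeComm (N.Incident v) (N.Incident u)) _).symm
    (colorCount_comp_equiv (subtypeSubtypeComm (fun e => ¬N.Incident v e) (N.Incident u)) _).symm

instance : IsEmpty ((N.deleteEdgesAt v).EdgesAt v) := ⟨fun e => e.1.2 e.2⟩

lemma colorsAt_deleteEdgesAt_self (φ : (N.deleteEdgesAt v).Edge → Fin k) :
    (N.deleteEdgesAt v).colorsAt φ v = 0 :=
  funext fun _ => Nat.card_of_isEmpty

lemma prod_eq_mul_prod_pin {R : Type*} [CommMonoid R] [Fintype V] (h : V → (Fin k → ℕ) → R)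
    (ψ : N.EdgesAt v → Fin k) (φ : (N.deleteEdgesAt v).Edge → Fin k) :
    ∏ u, h u (N.pinnedColors v ψ u + (N.deleteEdgesAt v).colorsAt φ u) =
      h v (colorCount ψ) * ∏ u, N.pin v ψ h u ((N.deleteEdgesAt v).colorsAt φ u) := by
  rw [← mul_prod_erase univ _ (mem_univ v), ← mul_prod_erase univ _ (mem_univ v),
    colorsAt_deleteEdgesAt_self, add_zero, pinnedColors_self, pin, if_pos rfl, one_mul]
  refine congrArg _ (prod_congr rfl fun u hu => ?_)
  rw [pin, if_neg (ne_of_mem_erase hu), add_comm]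

theorem contract_eq_sum_pin {R : Type*} [CommSemiring R] [Fintype V]
    (h : V → (Fin k → ℕ) → R) :
    N.contract h = ∑ ψ : N.EdgesAt v → Fin k,
      h v (colorCount ψ) * (N.deleteEdgesAt v).contract (N.pin v ψ h) := by
  rw [contract, ← (Equiv.piEquivPiSubtypeProd (N.Incident v) fun _ => Fin k).symm.sum_comp,
    Fintype.sum_prod_type]
  refine sum_congr rfl fun ψ _ => ?_
  rw [contract, mul_sum]
  refine sum_congr rfl fun φ _ => ?_
  rw [← prod_eq_mul_prod_pin]
  refine prod_congr rfl fun u _ => congrArg _ ?_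
  rw [colorsAt_eq_add _ v]
  congr <;> funext e <;> simp [Equiv.piEquivPiSubtypeProd_symm_apply, e.2]

variable {N v} in
lemma IsNearOne.pin {δ : ℝ} {h : V → (Fin k → ℕ) → ℂ} (hh : N.IsNearOne δ h) (hδ : 0 ≤ δ)
    (ψ : N.EdgesAt v → Fin k) : (N.deleteEdgesAt v).IsNearOne δ (N.pin v ψ h) := by
  intro u α hα
  by_cases huv : u = v
  · simpa [Multigraph.pin, huv] using hδ
  · rw [Multigraph.pin, if_neg huv]
    apply hh
    simp only [Pi.add_apply, sum_add_distrib]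
    rw [hα, pinnedColors, sum_colorCount, N.degree_eq_add v u, add_comm]

def endsAt : Finset V :=
  univ.image (fun f : N.EdgesAt v => N.fst f) ∪ univ.image (fun f : N.EdgesAt v => N.snd f)

lemma card_endsAt_le : #(N.endsAt v) ≤ 2 * N.degree v := by
  have hcard : #(univ : Finset (N.EdgesAt v)) = N.degree v := by
    rw [card_univ, degree, Nat.card_eq_fintype_card]
  have := card_union_le (univ.image fun f : N.EdgesAt v => N.fst f)
    (univ.image fun f : N.EdgesAt v => N.snd f)
  have := card_image_le (s := univ) (f := fun f : N.EdgesAt v => N.fst f)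
  have := card_image_le (s := univ) (f := fun f : N.EdgesAt v => N.snd f)
  rw [endsAt]
  omega

variable {N v}

lemma pinnedColors_eq_zero_of_notMem_endsAt {u : V} (hu : u ∉ N.endsAt v)
    (ψ : N.EdgesAt v → Fin k) : N.pinnedColors v ψ u = 0 := by
  have : IsEmpty {f : N.EdgesAt v // N.Incident u f} := ⟨fun f => hu <| by
    rcases f.2 with h | h
    · exact mem_union_left _ (mem_image.mpr ⟨f, mem_univ _, h⟩)
    · exact mem_union_right _ (mem_image.mpr ⟨f, mem_univ _, h⟩)⟩
  exact funext fun _ => Nat.card_of_isEmpty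

lemma pin_eq_pin_of_notMem_endsAt {R : Type*} [One R] (h : V → (Fin k → ℕ) → R) {u : V}
    (hu : u ∉ N.endsAt v) (ψ ψ' : N.EdgesAt v → Fin k) : N.pin v ψ h u = N.pin v ψ' h u := by
  simp only [Multigraph.pin, pinnedColors_eq_zero_of_notMem_endsAt hu]

end Deletion

section Stability

variable [Fintype V]

def IsStable (k : ℕ) (θ δ : ℝ) : Prop :=
  ∀ (h h' : V → (Fin k → ℕ) → ℂ) (v : V), N.IsNearOne δ h → N.IsNearOne δ h' →
    (∀ u ≠ v, h' u = h u) → ‖N.contract h' - N.contract h‖ ≤ θ * ‖N.contract h‖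

variable {N}

lemma contract_ne_zero_of_isEmpty [IsEmpty N.Edge] {δ : ℝ} (hδ : δ < 1)
    {h : V → (Fin k → ℕ) → ℂ} (hh : N.IsNearOne δ h) : N.contract h ≠ 0 := by
  rw [contract, Fintype.sum_unique]
  refine prod_ne_zero_iff.mpr fun u _ h0 => ?_
  have := hh u (N.colorsAt default u) (N.sum_colorsAt default u)
  rw [h0, zero_sub, norm_neg, norm_one] at this
  linarith

variable [DecidableEq V] {θ : ℝ} {Δ : ℕ}

/-- Change the tensors at the vertices of `S` one at a time. -/
lemma IsStable.norm_contract_sub_le {δ : ℝ} (hN : N.IsStable k θ δ) (hθ : 0 ≤ θ)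
    {h : V → (Fin k → ℕ) → ℂ} (hh : N.IsNearOne δ h) (S : Finset V) :
    ∀ h' : V → (Fin k → ℕ) → ℂ, N.IsNearOne δ h' → (∀ u ∉ S, h' u = h u) →
      ‖N.contract h' - N.contract h‖ ≤ ((1 + θ) ^ #S - 1) * ‖N.contract h‖ := by
  induction S using Finset.induction_on with
  | empty =>
    intro h' _ hS
    simp [funext fun u => hS u (notMem_empty u)]
  | @insert w S hw ih =>
    intro h' hh' hS
    set g := S.piecewise h' h
    have hg : N.IsNearOne δ g := fun u α hα => by
      by_cases hu : u ∈ S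
      · simpa [g, hu] using hh' u α hα
      · simpa [g, hu] using hh u α hα
    have hgS := ih g hg fun u hu => S.piecewise_eq_of_notMem _ _ hu
    have hgw := hN g h' w hg hh' fun u hu => by
      by_cases huS : u ∈ S
      · simp [g, huS]
      · rw [hS u (by simp [hu, huS])]
        exact (S.piecewise_eq_of_notMem _ _ huS).symm
    have hnorm_g : ‖N.contract g‖ ≤ (1 + θ) ^ #S * ‖N.contract h‖ := by
      have := norm_le_norm_add_norm_sub' (N.contract g) (N.contract h)
      linarith
    calc ‖N.contract h' - N.contract h‖
        ≤ ‖N.contract h' - N.contract g‖ + ‖N.contract g - N.contract h‖ :=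
          norm_sub_le_norm_sub_add_norm_sub _ _ _
      _ ≤ θ * ((1 + θ) ^ #S * ‖N.contract h‖) + ((1 + θ) ^ #S - 1) * ‖N.contract h‖ := by
          gcongr
          exact hgw.trans (by gcongr)
      _ = ((1 + θ) ^ #(insert w S) - 1) * ‖N.contract h‖ := by
          rw [card_insert_of_notMem hw, pow_succ]
          ring

lemma norm_contract_pin_sub_le (hθ : 0 ≤ θ) (hpow : (1 + θ) ^ (2 * Δ) ≤ 4 / 3) {v : V}
    (hv : N.degree v ≤ Δ) (hdel : 0 < N.degree v → (N.deleteEdgesAt v).IsStable k θ (θ / 8))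
    {h : V → (Fin k → ℕ) → ℂ} (hh : N.IsNearOne (θ / 8) h) (ψ ψ₀ : N.EdgesAt v → Fin k) :
    ‖(N.deleteEdgesAt v).contract (N.pin v ψ h) - (N.deleteEdgesAt v).contract (N.pin v ψ₀ h)‖ ≤
      ‖(N.deleteEdgesAt v).contract (N.pin v ψ₀ h)‖ / 3 := by
  rcases (N.degree v).eq_zero_or_pos with hv0 | hvpos
  · have : IsEmpty (N.EdgesAt v) :=
      (Nat.card_eq_zero.mp hv0).resolve_right (not_infinite_iff_finite.mpr inferInstance)
    rw [Subsingleton.elim ψ ψ₀, sub_self, norm_zero]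
    positivity
  have hδ : 0 ≤ θ / 8 := by positivity
  refine ((hdel hvpos).norm_contract_sub_le hθ (hh.pin hδ ψ₀) (N.endsAt v) _ (hh.pin hδ ψ)
    fun u hu => pin_eq_pin_of_notMem_endsAt h hu ψ ψ₀).trans ?_
  have hends : (1 + θ) ^ #(N.endsAt v) ≤ (1 + θ) ^ (2 * Δ) :=
    pow_le_pow_right₀ (by linarith) ((N.card_endsAt_le v).trans (by omega))
  nlinarith [norm_nonneg ((N.deleteEdgesAt v).contract (N.pin v ψ₀ h))]

lemma norm_contract_sub_le_of_deleteEdgesAt [NeZero k] (hθ : 0 ≤ θ) (hθ1 : θ ≤ 1)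
    (hpow : (1 + θ) ^ (2 * Δ) ≤ 4 / 3) {v : V} (hv : N.degree v ≤ Δ)
    (hdel : 0 < N.degree v → (N.deleteEdgesAt v).IsStable k θ (θ / 8))
    {h h' : V → (Fin k → ℕ) → ℂ} (hh : N.IsNearOne (θ / 8) h) (hh' : N.IsNearOne (θ / 8) h')
    (hagree : ∀ u ≠ v, h' u = h u) :
    ‖N.contract h' - N.contract h‖ ≤ θ * ‖N.contract h‖ := by
  set r := fun ψ : N.EdgesAt v → Fin k => (N.deleteEdgesAt v).contract (N.pin v ψ h)
  set ψ₀ : N.EdgesAt v → Fin k := fun _ => 0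
  have hr := norm_contract_pin_sub_le hθ hpow hv hdel hh (ψ₀ := ψ₀)
  have hnear {g : V → (Fin k → ℕ) → ℂ} (hg : N.IsNearOne (θ / 8) g) (ψ : N.EdgesAt v → Fin k) :
      ‖g v (colorCount ψ) - 1‖ ≤ θ / 8 :=
    hg v _ (sum_colorCount ψ)
  have hpin (ψ : N.EdgesAt v → Fin k) : N.pin v ψ h' = N.pin v ψ h := by
    funext u
    by_cases huv : u = v
    · simp [Multigraph.pin, huv]
    · simp [Multigraph.pin, huv, hagree u huv]
  have hdecomp' : N.contract h' = ∑ ψ, h' v (colorCount ψ) * r ψ := by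
    simp only [N.contract_eq_sum_pin v h', hpin, r]
  rw [hdecomp', N.contract_eq_sum_pin v h]
  refine (norm_sum_mul_sub_sum_mul_le (hnear hh) (hnear hh') hr).trans ?_
  refine le_trans ?_ (mul_le_mul_of_nonneg_left
    (le_norm_sum_mul (fun ψ => (hnear hh ψ).trans (by linarith)) hr) hθ)
  have hR := norm_nonneg ((N.deleteEdgesAt v).contract (N.pin v ψ₀ h))
  have hcard : (0 : ℝ) ≤ Fintype.card (N.EdgesAt v → Fin k) := by positivity
  nlinarith [mul_nonneg (mul_nonneg hcard hθ) hR]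

lemma contract_ne_zero_of_deleteEdgesAt [NeZero k] (hθ : 0 ≤ θ) (hθ1 : θ ≤ 1)
    (hpow : (1 + θ) ^ (2 * Δ) ≤ 4 / 3) {v : V} (hv : N.degree v ≤ Δ)
    (hdel : (N.deleteEdgesAt v).IsStable k θ (θ / 8))
    (hdel_ne : ∀ g : V → (Fin k → ℕ) → ℂ, (N.deleteEdgesAt v).IsNearOne (θ / 8) g →
      (N.deleteEdgesAt v).contract g ≠ 0)
    {h : V → (Fin k → ℕ) → ℂ} (hh : N.IsNearOne (θ / 8) h) : N.contract h ≠ 0 := by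
  set ψ₀ : N.EdgesAt v → Fin k := fun _ => 0
  have hr := norm_contract_pin_sub_le hθ hpow hv (fun _ => hdel) hh (ψ₀ := ψ₀)
  have hge := le_norm_sum_mul (fun ψ => (hh v _ (sum_colorCount ψ)).trans (by linarith)) hr
  have hr₀ := hdel_ne _ (hh.pin (by positivity) ψ₀)
  rw [← norm_pos_iff] at hr₀ ⊢
  rw [N.contract_eq_sum_pin v h]
  refine lt_of_lt_of_le ?_ hge
  have : (0 : ℝ) < Fintype.card (N.EdgesAt v → Fin k) := by exact_mod_cast Fintype.card_pos
  positivity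

theorem isStable_and_contract_ne_zero [NeZero k] (hθ : 0 ≤ θ) (hθ1 : θ ≤ 1)
    (hpow : (1 + θ) ^ (2 * Δ) ≤ 4 / 3) (N : Multigraph V) (hΔ : ∀ v, N.degree v ≤ Δ) :
    N.IsStable k θ (θ / 8) ∧
      ∀ h : V → (Fin k → ℕ) → ℂ, N.IsNearOne (θ / 8) h → N.contract h ≠ 0 := by
  induction hn : Nat.card N.Edge using Nat.strong_induction_on generalizing N with
  | _ n ih =>
  have hdel (v : V) (hv : 0 < N.degree v) := ih _ (hn ▸ N.card_edge_deleteEdgesAt_lt v hv)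
    (N.deleteEdgesAt v) (fun u => (N.degree_deleteEdgesAt_le v u).trans (hΔ u)) rfl
  refine ⟨fun h h' v hh hh' hagree => norm_contract_sub_le_of_deleteEdgesAt hθ hθ1 hpow (hΔ v)
    (fun hv => (hdel v hv).1) hh hh' hagree, fun h hh => ?_⟩
  by_cases hE : IsEmpty N.Edge
  · exact contract_ne_zero_of_isEmpty (by linarith) hh
  obtain ⟨e⟩ := not_isEmpty_iff.mp hE
  have hpos : 0 < N.degree (N.fst e) := Nat.card_pos_iff.mpr ⟨⟨⟨e, Or.inl rfl⟩⟩, inferInstance⟩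
  exact contract_ne_zero_of_deleteEdgesAt hθ hθ1 hpow (hΔ _) (hdel _ hpos).1 (hdel _ hpos).2 hh

end Stability

section Invariance

def Loopless : Prop := ∀ e, N.fst e ≠ N.snd e

/-- The half-edges at `v`: the copies `inl e` and `inr e` of an edge `e` stand for its ends
`fst e` and `snd e`. -/
abbrev HalfEdgesAt (v : V) : Type := {d : N.Edge ⊕ N.Edge // Sum.elim N.fst N.snd d = v}

lemma colorsAt_eq_colorCount_halfEdgesAt (hN : N.Loopless) (φ : N.Edge → Fin k) (v : V) :
    N.colorsAt φ v = colorCount fun d : N.HalfEdgesAt v => Sum.elim φ φ d.1 := by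
  let toEdge (d : N.HalfEdgesAt v) : N.EdgesAt v :=
    ⟨Sum.elim id id d.1, by rcases d with ⟨e | e, he⟩; exacts [.inl he, .inr he]⟩
  have hbij : Function.Bijective toEdge := by
    refine ⟨?_, fun ⟨e, he⟩ =>
      he.elim (fun he => ⟨⟨.inl e, he⟩, rfl⟩) fun he => ⟨⟨.inr e, he⟩, rfl⟩⟩
    rintro ⟨d | d, hd⟩ ⟨d' | d', hd'⟩ h <;> obtain rfl : d = d' := congrArg Subtype.val h
    · rfl
    · exact absurd (hd.trans hd'.symm) (hN d)
    · exact absurd (hd'.trans hd.symm) (hN d)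
    · rfl
  rw [colorsAt, ← colorCount_comp_equiv (Equiv.ofBijective toEdge hbij)]
  congr 1
  funext d
  rcases d with ⟨d | d, hd⟩ <;> rfl

theorem contract_transform {R : Type*} [CommSemiring R] [Fintype V] [DecidableEq V]
    (hN : N.Loopless) {U : Matrix (Fin k) (Fin k) R} (hU : Uᵀ * U = 1)
    (h : V → (Fin k → ℕ) → R) :
    N.contract (fun v => transform U (h v)) = N.contract h := by
  set X : (N.Edge ⊕ N.Edge → Fin k) → R :=
    fun c => ∏ v, h v (colorCount fun d : N.HalfEdgesAt v => c d)
  calc N.contract (fun v => transform U (h v))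
      = ∑ ℓ : N.Edge → Fin k, ∑ c : N.Edge ⊕ N.Edge → Fin k,
          X c * ∏ d, U (Sum.elim ℓ ℓ d) (c d) := by
        refine sum_congr rfl fun ℓ _ => ?_
        simp only [colorsAt_eq_colorCount_halfEdgesAt N hN, transform_eq_sum]
        refine (prod_sum_fiberwise (Sum.elim N.fst N.snd) _).trans (sum_congr rfl fun c _ => ?_)
        rw [prod_mul_distrib]
        exact congrArg _
          (Fintype.prod_fiberwise (Sum.elim N.fst N.snd) fun d => U (Sum.elim ℓ ℓ d) (c d))
    _ = ∑ c : N.Edge ⊕ N.Edge → Fin k, X c * if c ∘ Sum.inl = c ∘ Sum.inr then 1 else 0 := by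
        rw [sum_comm]
        refine sum_congr rfl fun c _ => ?_
        simp only [← mul_sum, Fintype.prod_sum_type, Sum.elim_inl, Sum.elim_inr,
          ← prod_mul_distrib]
        rw [← sum_prod_mul_eq_ite hU]
        rfl
    _ = ∑ φ : N.Edge → Fin k, X (Sum.elim φ φ) := by
        rw [← (Equiv.sumArrowEquivProdArrow _ _ _).symm.sum_comp, Fintype.sum_prod_type]
        refine sum_congr rfl fun a _ => ?_
        change ∑ b, X (Sum.elim a b) *
          (if Sum.elim a b ∘ Sum.inl = Sum.elim a b ∘ Sum.inr then 1 else 0) = _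
        simp only [Sum.elim_comp_inl, Sum.elim_comp_inr]
        rw [Fintype.sum_eq_single a fun b hb => by simp [Ne.symm hb]]
        simp
    _ = N.contract h := by
        simp only [X, contract, colorsAt_eq_colorCount_halfEdgesAt N hN]

end Invariance

section RankOne

variable {x : Fin k → ℂ} {c : ℂ} {U : Matrix (Fin k) (Fin k) ℂ} {M ε : ℝ} {a : V → ℂ}
  {h : V → (Fin k → ℕ) → ℂ}

lemma isNearOne_of_norm_sub_rankOne_le {δ : ℝ} (hc : c ≠ 0) (hUx : U *ᵥ x = fun _ => c)
    (hU : ∀ i j, ‖U i j‖ ≤ M) (ha : ∀ v, a v ≠ 0)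
    (hh : ∀ v α, ∑ j, α j = N.degree v →
      ‖h v α - a v * ∏ j, x j ^ α j‖ ≤ ‖a v‖ * ‖c‖ ^ N.degree v * ε)
    (hε : ∀ v, (k * M) ^ N.degree v * ε ≤ δ) :
    N.IsNearOne δ fun v α => (a v * c ^ N.degree v)⁻¹ * transform U (h v) α := by
  intro v α hα
  set s := a v * c ^ N.degree v
  have hs : s ≠ 0 := mul_ne_zero (ha v) (pow_ne_zero _ hc)
  set err : (Fin k → ℕ) → ℂ := fun β => h v β - a v * ∏ j, x j ^ β j
  have hsplit : h v = (fun β => a v * ∏ j, x j ^ β j) + err := by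
    funext β
    simp [err]
  have herr : ‖transform U err α‖ ≤ ‖s‖ * ((k * M) ^ N.degree v * ε) := by
    have := norm_transform_le U hU err α fun β hβ => hh v β (hβ.trans hα)
    rw [hα] at this
    rw [norm_mul, norm_pow]
    linarith
  show ‖s⁻¹ * transform U (h v) α - 1‖ ≤ δ
  rw [hsplit, transform_add, transform_rankOne, hUx, prod_pow_eq_pow_sum, hα, mul_add,
    inv_mul_cancel₀ hs, add_sub_cancel_left, norm_mul, norm_inv,
    inv_mul_le_iff₀ (norm_pos_iff.mpr hs)]
  exact herr.trans (mul_le_mul_of_nonneg_left (hε v) (norm_nonneg _))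

theorem contract_ne_zero_of_norm_sub_rankOne_le [Fintype V] [DecidableEq V] [NeZero k]
    (hN : N.Loopless) {Δ : ℕ} (hΔ : ∀ v, N.degree v ≤ Δ) {θ : ℝ} (hθ : 0 ≤ θ) (hθ1 : θ ≤ 1)
    (hpow : (1 + θ) ^ (2 * Δ) ≤ 4 / 3) (hc : c ≠ 0) (hUU : Uᵀ * U = 1)
    (hUx : U *ᵥ x = fun _ => c) (hU : ∀ i j, ‖U i j‖ ≤ M) (ha : ∀ v, a v ≠ 0)
    (hh : ∀ v α, ∑ j, α j = N.degree v →
      ‖h v α - a v * ∏ j, x j ^ α j‖ ≤ ‖a v‖ * ‖c‖ ^ N.degree v * ε)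
    (hε : ∀ v, (k * M) ^ N.degree v * ε ≤ θ / 8) : N.contract h ≠ 0 := by
  have hne := (isStable_and_contract_ne_zero hθ hθ1 hpow N hΔ).2 _
    (N.isNearOne_of_norm_sub_rankOne_le hc hUx hU ha hh hε)
  rw [contract_mul, contract_transform N hN hUU] at hne
  exact right_ne_zero_of_mul hne

theorem exists_forall_contract_ne_zero [NeZero k] (hc : c ≠ 0) (hUU : Uᵀ * U = 1)
    (hUx : U *ᵥ x = fun _ => c) (Δ : ℕ) :
    ∃ ε : ℝ, 0 < ε ∧ ∀ {V : Type} [Fintype V] [DecidableEq V] (N : Multigraph V), N.Loopless →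
      (∀ v, N.degree v ≤ Δ) → ∀ (a : V → ℂ) (h : V → (Fin k → ℕ) → ℂ), (∀ v, a v ≠ 0) →
      (∀ v α, ∑ j, α j = N.degree v →
        ‖h v α - a v * ∏ j, x j ^ α j‖ ≤ ‖a v‖ * ‖c‖ ^ N.degree v * ε) →
      N.contract h ≠ 0 := by
  obtain ⟨θ, hθ, hθ1, hpow⟩ := exists_one_add_pow_le Δ
  set M := ∑ i, ∑ j, ‖U i j‖
  have hM (i j : Fin k) : ‖U i j‖ ≤ M :=
    (single_le_sum (fun j _ => norm_nonneg _) (mem_univ j)).trans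
      (single_le_sum (f := fun i => ∑ j, ‖U i j‖) (fun i _ => sum_nonneg fun j _ => norm_nonneg _)
        (mem_univ i))
  have hB : 1 ≤ (k * M + 1 : ℝ) :=
    le_add_of_nonneg_left (mul_nonneg (Nat.cast_nonneg k) ((norm_nonneg _).trans (hM 0 0)))
  refine ⟨θ / 8 / (k * M + 1) ^ Δ, by positivity, fun N hN hΔ a h ha hh =>
    N.contract_ne_zero_of_norm_sub_rankOne_le hN hΔ hθ.le hθ1 hpow hc hUU hUx hM ha hh fun v => ?_⟩
  calc (k * M) ^ N.degree v * (θ / 8 / (k * M + 1) ^ Δ)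
      ≤ (k * M + 1) ^ Δ * (θ / 8 / (k * M + 1) ^ Δ) := by
        gcongr
        exact (pow_le_pow_left₀ (by positivity) (by linarith) _).trans
          (pow_le_pow_right₀ hB (hΔ v))
    _ = θ / 8 := mul_div_cancel₀ _ (by positivity)

end RankOne

section SimpleGraph

variable [Fintype V] (G : SimpleGraph V)

/-- `G` as a multigraph, each edge `e` oriented by its chosen representative `e.out`. -/
def ofSimpleGraph : Multigraph V where
  Edge := G.edgeSet
  fintypeEdge := Fintype.ofFinite _
  decidableEqEdge := Classical.decEq _
  fst e := (Quot.out (e : Sym2 V)).1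
  snd e := (Quot.out (e : Sym2 V)).2

lemma mk_ofSimpleGraph (e : G.edgeSet) :
    s((ofSimpleGraph G).fst e, (ofSimpleGraph G).snd e) = e :=
  Quot.out_eq _

lemma incident_ofSimpleGraph_iff {v : V} {e : G.edgeSet} :
    (ofSimpleGraph G).Incident v e ↔ v ∈ (e : Sym2 V) := by
  show (ofSimpleGraph G).fst e = v ∨ (ofSimpleGraph G).snd e = v ↔ _
  rw [← mk_ofSimpleGraph G e, Sym2.mem_iff]
  exact or_congr eq_comm eq_comm

lemma loopless_ofSimpleGraph : (ofSimpleGraph G).Loopless := fun e => by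
  have hadj : G.Adj ((ofSimpleGraph G).fst e) ((ofSimpleGraph G).snd e) := by
    rw [← SimpleGraph.mem_edgeSet, mk_ofSimpleGraph G e]
    exact e.2
  exact hadj.ne

lemma degree_ofSimpleGraph [DecidableEq V] (v : V) : (ofSimpleGraph G).degree v = deg G v := by
  rw [degree, deg, ← Nat.card_congr (G.incidenceSetEquivNeighborSet v)]
  exact Nat.card_congr
    ((Equiv.subtypeEquivRight fun e => incident_ofSimpleGraph_iff G).trans
      (Equiv.subtypeSubtypeEquivSubtypeInter (· ∈ G.edgeSet) (v ∈ ·)))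

lemma tnc_eq_contract [DecidableEq V] (h : V → (Fin k → ℕ) → ℂ) :
    tnc k G h = (ofSimpleGraph G).contract h := by
  let : Fintype G.edgeSet := (ofSimpleGraph G).fintypeEdge
  let : DecidableEq G.edgeSet := (ofSimpleGraph G).decidableEqEdge
  rw [tnc, finsum_eq_sum_of_fintype, contract]
  refine sum_congr rfl fun φ _ => prod_congr rfl fun v _ => congrArg (h v) (funext fun j => ?_)
  exact Nat.card_congr ((Equiv.subtypeEquivRight fun e =>
    and_congr_left' (incident_ofSimpleGraph_iff G).symm).trans
    (Equiv.subtypeSubtypeEquivSubtypeInter (fun e => (ofSimpleGraph G).Incident v e)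
      fun e => φ e = j).symm)

end SimpleGraph

end Multigraph

lemma norm_rpow_div_two_eq_norm_pow {𝕜 : Type*} [NormedDivisionRing 𝕜] {c z : 𝕜} (hc : c ^ 2 = z)
    (d : ℕ) : ‖z‖ ^ ((d : ℝ) / 2) = ‖c‖ ^ d := by
  rw [← hc, norm_pow, Real.rpow_div_two_eq_sqrt _ (by positivity), Real.sqrt_sq (norm_nonneg _),
    Real.rpow_natCast]

end TensorNetwork

open TensorNetwork Multigraph

theorem stmt3_general (k : ℕ) (Δ : ℕ) (x : Fin k → ℂ)
    (hx : (∑ i, x i ^ 2) ≠ 0) :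
    ∃ δ : ℝ, 0 < δ ∧
      ∀ (W : Type) [Fintype W] [DecidableEq W] (G : SimpleGraph W),
        maxDeg G ≤ Δ →
        ∀ a : W → ℂ, (∀ v, a v ≠ 0) →
        ∀ h : W → (Fin k → ℕ) → ℂ,
          (∀ v : W, ∀ α : Fin k → ℕ, (∑ j, α j) = deg G v →
            ‖h v α - a v * ∏ j, x j ^ α j‖ ≤
              ‖a v‖ * ‖(∑ i, x i ^ 2) / (k : ℂ)‖ ^ ((deg G v : ℝ) / 2)
                * δ / (2 * (maxDeg G + 1 : ℝ))) →
          tnc k G h ≠ 0 := by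
  have hk : NeZero k := ⟨by rintro rfl; exact hx (by simp)⟩
  obtain ⟨c, hc⟩ := IsAlgClosed.exists_pow_nat_eq ((∑ i, x i ^ 2) / k) two_pos
  have hc0 : c ≠ 0 := by
    rintro rfl
    exact hx (by simpa [NeZero.ne k] using hc.symm)
  obtain ⟨U, hUU, hUx⟩ := exists_transpose_mul_eq_one_mulVec_eq (x := x) (z := fun _ => c)
    (by simp only [dotProduct, ← sq, sum_const, card_univ, Fintype.card_fin, nsmul_eq_mul, hc]
        exact (mul_div_cancel₀ _ (Nat.cast_ne_zero.mpr (NeZero.ne k))).symm)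
    (by simpa [dotProduct, sq] using hx)
  obtain ⟨ε, hε, hne⟩ := exists_forall_contract_ne_zero hc0 hUU hUx Δ
  refine ⟨ε, hε, fun W _ _ G hG a ha h hh => ?_⟩
  rw [tnc_eq_contract]
  refine hne _ (loopless_ofSimpleGraph G) (fun v => ?_) a h ha fun v α hα => ?_
  · rw [degree_ofSimpleGraph]
    exact (le_sup (mem_univ v)).trans hG
  · rw [degree_ofSimpleGraph] at hα ⊢
    calc ‖h v α - a v * ∏ j, x j ^ α j‖
        ≤ ‖a v‖ * ‖(∑ i, x i ^ 2) / (k : ℂ)‖ ^ ((deg G v : ℝ) / 2) * ε / (2 * (maxDeg G + 1 : ℝ)) :=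
          hh v α hα
      _ ≤ ‖a v‖ * ‖(∑ i, x i ^ 2) / (k : ℂ)‖ ^ ((deg G v : ℝ) / 2) * ε :=
          div_le_self (by positivity) (by linarith [(Nat.cast_nonneg (maxDeg G) : (0 : ℝ) ≤ _)])
      _ = ‖a v‖ * ‖c‖ ^ deg G v * ε := by rw [norm_rpow_div_two_eq_norm_pow hc]

/-- Corollary (orthogonal-invariance version). For fixed `Δ`, `k` and
`x ∈ ℂ^k` with `(x,x) = Σ x_i² ≠ 0`, there is `δ > 0` such that any tensor network whose
tensors are suitably close to the rank-one tensors `a_v·h_x` has nonzero contraction on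
graphs of maximum degree at most `Δ`. -/
theorem stmt3 (k : ℕ) (hk : 2 ≤ k) (Δ : ℕ) (x : Fin k → ℂ)
    (hx : (∑ i, x i ^ 2) ≠ 0) :
    ∃ δ : ℝ, 0 < δ ∧
      ∀ (W : Type) [Fintype W] [DecidableEq W] (G : SimpleGraph W),
        maxDeg G ≤ Δ →
        ∀ a : W → ℂ, (∀ v, a v ≠ 0) →
        ∀ h : W → (Fin k → ℕ) → ℂ,
          (∀ v : W, ∀ α : Fin k → ℕ, (∑ j, α j) = deg G v →
            ‖h v α - a v * ∏ j, x j ^ α j‖ ≤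
              ‖a v‖ * ‖(∑ i, x i ^ 2) / (k : ℂ)‖ ^ ((deg G v : ℝ) / 2)
                * δ / (2 * (maxDeg G + 1 : ℝ))) →
          tnc k G h ≠ 0 :=
  stmt3_general k Δ x hx
end
end

section
/- Let ϑ ∈ [0, 2π/3). Let x_1, …, x_n be nonzero vectors in the Euclidean plane ℝ² such that for each pair i, j the angle between x_i and x_j does not exceed ϑ. Then ‖Σ_{i=1}^n x_i‖ ≥ cos(ϑ/2) · Σ_{i=1}^n ‖x_i‖. -/
/-!
Measure the arguments `θ i` of the vectors relative to one of them, so that `|θ i| ≤ ϑ`. Since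
`3ϑ < 2π`, no wrap-around modulo `2π` can occur and the `θ i` themselves pairwise differ by at
most `ϑ`; hence they all lie within `ϑ / 2` of the midpoint `m` of their range. Every vector then
makes an angle of at most `ϑ / 2` with the direction `u` of argument `m`, so projecting onto `u`
gives `‖∑ x i‖ ≥ ∑ ⟪x i, u⟫ / ‖u‖ ≥ cos (ϑ / 2) * ∑ ‖x i‖`.
-/

open InnerProductGeometry Real

theorem Real.Angle.coe_eq_coe_iff_of_abs_sub_lt {s t : ℝ} (h : |s - t| < 2 * π) :
    (s : Angle) = t ↔ s = t := by
  refine ⟨fun hst => ?_, congrArg _⟩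
  obtain ⟨k, hk⟩ := Angle.angle_eq_iff_two_pi_dvd_sub.1 hst
  have hk0 : k = 0 := by
    rw [hk, abs_mul, abs_of_pos two_pi_pos, mul_lt_iff_lt_one_right two_pi_pos] at h
    exact Int.abs_lt_one_iff.1 (by exact_mod_cast h)
  simpa [hk0, sub_eq_zero] using hk

theorem exists_forall_abs_sub_le_half {ι : Type*} [Finite ι] {f : ι → ℝ} {d : ℝ}
    (h : ∀ i j, f i - f j ≤ d) : ∃ m, ∀ i, |f i - m| ≤ d / 2 := by
  cases isEmpty_or_nonempty ι
  · exact ⟨0, isEmptyElim⟩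
  obtain ⟨imin, hmin⟩ := Finite.exists_min f
  obtain ⟨imax, hmax⟩ := Finite.exists_max f
  refine ⟨(f imin + f imax) / 2, fun i => abs_le.2 ⟨?_, ?_⟩⟩ <;>
    linarith [hmin i, hmax i, h imax imin]

theorem InnerProductGeometry.cos_mul_sum_norm_le_norm_sum_s4 {V ι : Type*} [NormedAddCommGroup V]
    [InnerProductSpace ℝ V] (s : Finset ι) (x : ι → V) {u : V} (hu : u ≠ 0) {α : ℝ}
    (hα : α ≤ π) (h : ∀ i ∈ s, angle (x i) u ≤ α) :
    cos α * ∑ i ∈ s, ‖x i‖ ≤ ‖∑ i ∈ s, x i‖ := by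
  refine le_of_mul_le_mul_right ?_ (norm_pos_iff.2 hu)
  calc (cos α * ∑ i ∈ s, ‖x i‖) * ‖u‖
      = ∑ i ∈ s, cos α * (‖x i‖ * ‖u‖) := by
        rw [Finset.mul_sum, Finset.sum_mul]; simp only [mul_assoc]
    _ ≤ ∑ i ∈ s, cos (angle (x i) u) * (‖x i‖ * ‖u‖) := by
      gcongr with i hi
      exact cos_le_cos_of_nonneg_of_le_pi (angle_nonneg _ _) hα (h i hi)
    _ = inner ℝ (∑ i ∈ s, x i) u := by simp [cos_angle_mul_norm_mul_norm, sum_inner]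
    _ ≤ ‖∑ i ∈ s, x i‖ * ‖u‖ := real_inner_le_norm _ _

theorem Complex.exists_forall_angle_le_half {ι : Type*} [Finite ι] {z : ι → ℂ} {ϑ : ℝ}
    (hϑ : ϑ < 2 * π / 3) (hz : ∀ i, z i ≠ 0) (h : ∀ i j, angle (z i) (z j) ≤ ϑ) :
    ∃ u ≠ 0, ∀ i, angle (z i) u ≤ ϑ / 2 := by
  cases isEmpty_or_nonempty ι with
  | inl => exact ⟨1, one_ne_zero, isEmptyElim⟩
  | inr hι =>
  obtain ⟨i₀⟩ := hι
  set θ : ι → ℝ := fun i => (z i / z i₀).arg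
  have hθ_coe (i j : ι) : ((θ i - θ j : ℝ) : Angle) = (z i / z j).arg := by
    simp only [θ, Angle.coe_sub, arg_div_coe_angle (hz _) (hz _)]
    abel
  have hθ_abs (i : ι) : |θ i| ≤ ϑ := (angle_eq_abs_arg (hz i) (hz i₀)).symm ▸ h i i₀
  have hθ_sub (i j : ι) : θ i - θ j ≤ ϑ := by
    have harg : |(z i / z j).arg| ≤ ϑ := (angle_eq_abs_arg (hz i) (hz j)).symm ▸ h i j
    have : (z i / z j).arg = θ i - θ j := by
      refine (Angle.coe_eq_coe_iff_of_abs_sub_lt ?_).1 (hθ_coe i j).symm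
      linarith [abs_sub (z i / z j).arg (θ i - θ j), abs_sub (θ i) (θ j), hθ_abs i, hθ_abs j]
    exact (le_abs_self _).trans (this ▸ harg)
  obtain ⟨m, hm⟩ := exists_forall_abs_sub_le_half hθ_sub
  have hu : z i₀ * exp (m * I) ≠ 0 := mul_ne_zero (hz i₀) (exp_ne_zero _)
  refine ⟨_, hu, fun i => ?_⟩
  have hcoe : ((z i / (z i₀ * exp (m * I))).arg : Angle) = (θ i - m : ℝ) := by
    rw [← div_div, arg_div_coe_angle (div_ne_zero (hz i) (hz i₀)) (exp_ne_zero _),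
      arg_exp_mul_I, Angle.coe_toIocMod, Angle.coe_sub]
  have harg : (z i / (z i₀ * exp (m * I))).arg = θ i - m := by
    refine (Angle.coe_eq_coe_iff_of_abs_sub_lt ?_).1 hcoe
    linarith [abs_sub (z i / (z i₀ * exp (m * I))).arg (θ i - m), hm i, pi_pos,
      abs_arg_le_pi (z i / (z i₀ * exp (m * I)))]
  rw [angle_eq_abs_arg (hz i) hu, harg]
  exact hm i

theorem InnerProductGeometry.exists_forall_angle_le_half_of_finrank_eq_two {V ι : Type*}
    [NormedAddCommGroup V] [InnerProductSpace ℝ V] [Finite ι] (hV : Module.finrank ℝ V = 2)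
    {x : ι → V} {ϑ : ℝ} (hϑ : ϑ < 2 * π / 3) (hx : ∀ i, x i ≠ 0)
    (h : ∀ i j, angle (x i) (x j) ≤ ϑ) : ∃ u ≠ 0, ∀ i, angle (x i) u ≤ ϑ / 2 := by
  have : FiniteDimensional ℝ V := .of_finrank_pos (by omega)
  let e := (Complex.isometryOfOrthonormal ((stdOrthonormalBasis ℝ V).reindex (finCongr hV))).symm
  obtain ⟨u, hu, hxu⟩ := Complex.exists_forall_angle_le_half (z := fun i => e (x i)) hϑ
    (by simpa using hx) fun i j => (e.toLinearIsometry.angle_map _ _).trans_le (h i j)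
  refine ⟨e.symm u, by simpa using hu, fun i => ?_⟩
  rw [← e.toLinearIsometry.angle_map]
  simpa using hxu i

/-- Lemma of Boris Bukh: if nonzero plane vectors `x_1, …, x_n` pairwise
make an angle of at most `ϑ < 2π/3`, then `‖Σ x_i‖ ≥ cos(ϑ/2)·Σ‖x_i‖`. -/
theorem stmt4 (ϑ : ℝ) (hϑ : ϑ ∈ Set.Ico 0 (2 * Real.pi / 3)) (n : ℕ)
    (x : Fin n → EuclideanSpace ℝ (Fin 2)) (hx : ∀ i, x i ≠ 0)
    (hangle : ∀ i j, InnerProductGeometry.angle (x i) (x j) ≤ ϑ) :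
    Real.cos (ϑ / 2) * ∑ i, ‖x i‖ ≤ ‖∑ i, x i‖ := by
  obtain ⟨u, hu, hxu⟩ :=
    exists_forall_angle_le_half_of_finrank_eq_two finrank_euclideanSpace_fin hϑ.2 hx hangle
  exact cos_mul_sum_norm_le_norm_sum_s4 _ x hu (by linarith [hϑ.2, pi_pos]) fun i _ => hxu i
end

section
/- Let G = (V,E) be a finite simple graph and let h = (h^v) be a tensor network. Then the function q(z) := p(G)(I + z(h−I)), where I + z(h−I) assigns to each vertex v the map α ↦ 1 + z(h^v(α) − 1), is a polynomial in z of degree at most |V|, and for each m its coefficient of z^m equals Σ_{U ⊆ V, |U| = m} k^{|E ∖ E(U)|} · Σ_{φ : E(U) → {1,…,k}} Π_{v ∈ U} (h^v(φ(δ(v))) − 1), where E(U) denotes the set of edges of G incident with at least one vertex of U (so δ(v) ⊆ E(U) for every v ∈ U). -/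
noncomputable section

variable {V : Type} [Fintype V] [DecidableEq V]

/-- `E(U)`: the set of edges of `G` incident with at least one vertex of `U`. -/
def edgesTouching (G : SimpleGraph V) (U : Set V) : Set G.edgeSet :=
  {e | ∃ v ∈ U, v ∈ (e : Sym2 V)}

/-- For a coloring `φ : E(U) → [k]` and `v ∈ U` (so `δ(v) ⊆ E(U)`), the vector
`φ(δ(v)) ∈ ℕ^k` counting incident edges of each color. -/
def colorVecOn {k : ℕ} (G : SimpleGraph V) (U : Set V)
    (φ : edgesTouching G U → Fin k) (v : V) : Fin k → ℕ :=
  fun j => Nat.card {e : edgesTouching G U // v ∈ ((e : G.edgeSet) : Sym2 V) ∧ φ e = j}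

end

/-!
Expanding `∏ v, (1 + z (h^v − 1))` over subsets `U ⊆ V` gives `q(z) = Σ_U z^|U| c_U` with
`c_U = Σ_φ Π_{v ∈ U} (h^v(φ(δ(v))) − 1)`, the sum over colourings `φ` of all edges. The vertices
of `U` only see the colours on `E(U)`, so the colours of the other `|E ∖ E(U)|` edges are free and
contribute the factor `k^{|E ∖ E(U)|}`. Grouping the subsets by size gives the coefficients.
-/

lemma finsum_comp_domRestrict {α β M : Type*} [Finite α] [Finite β] [AddCommMonoid M]
    (s : Set α) (F : (s → β) → M) :
    ∑ᶠ f : α → β, F (s.domRestrict f) = (Nat.card β ^ Nat.card ↥sᶜ) • ∑ᶠ g : s → β, F g := by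
  classical
  have := Fintype.ofFinite α
  have := Fintype.ofFinite β
  rw [finsum_eq_sum_of_fintype, finsum_eq_sum_of_fintype, Finset.smul_sum]
  calc ∑ f : α → β, F (s.domRestrict f)
      = ∑ p : (s → β) × (↥sᶜ → β), F p.1 :=
        (Equiv.piEquivPiSubtypeProd (· ∈ s) fun _ => β).sum_comp fun p => F p.1
    _ = _ := by
        simp only [Fintype.sum_prod_type, Finset.sum_const, Finset.card_univ, Fintype.card_fun,
          Nat.card_eq_fintype_card]

lemma finsum_mem_ncard_eq {α M : Type*} [Fintype α] [AddCommMonoid M] (f : Set α → M) (m : ℕ) :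
    ∑ᶠ U ∈ {U : Set α | U.ncard = m}, f U =
      ∑ T ∈ Finset.powersetCard m (Finset.univ : Finset α), f T := by
  classical
  have hcoe : {U : Set α | U.ncard = m} =
      (↑) '' ((Finset.univ : Finset α).powersetCard m : Set (Finset α)) := by
    ext U
    simp only [Set.mem_ofPred_eq, Set.mem_image, Finset.mem_coe, Finset.mem_powersetCard,
      Finset.subset_univ, true_and]
    constructor
    · rintro rfl
      exact ⟨U.toFinset, (Set.ncard_eq_toFinset_card' U).symm, Set.coe_toFinset U⟩
    · rintro ⟨T, rfl, rfl⟩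
      exact Set.ncard_coe_finset T
  rw [hcoe, finsum_mem_image Finset.coe_injective.injOn, finsum_mem_coe_finset]

lemma Finset.prod_one_add_mul {ι R : Type*} [CommSemiring R] (s : Finset ι) (z : R)
    (a : ι → R) :
    ∏ i ∈ s, (1 + z * a i) = ∑ t ∈ s.powerset, z ^ t.card * ∏ i ∈ t, a i := by
  simp only [Finset.prod_one_add, Finset.prod_mul_distrib, Finset.prod_const]

section

variable {V : Type} {k : ℕ} (G : SimpleGraph V)

lemma colorVec_eq_colorVecOn {U : Set V} (φ : G.edgeSet → Fin k) {v : V} (hv : v ∈ U) :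
    colorVec G φ v = colorVecOn G U ((edgesTouching G U).domRestrict φ) v :=
  funext fun _ => Nat.card_congr
    { toFun := fun e => ⟨⟨e.1, v, hv, e.2.1⟩, e.2⟩
      invFun := fun e => ⟨e.1.1, e.2⟩
      left_inv := fun _ => rfl
      right_inv := fun _ => rfl }

lemma finsum_finprod_colorVec [Finite V] (U : Set V) (f : V → (Fin k → ℕ) → ℂ) :
    ∑ᶠ φ : G.edgeSet → Fin k, ∏ᶠ v ∈ U, f v (colorVec G φ v) =
      (k : ℂ) ^ Nat.card ((edgesTouching G U)ᶜ : Set G.edgeSet) *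
        ∑ᶠ ψ : edgesTouching G U → Fin k, ∏ᶠ v ∈ U, f v (colorVecOn G U ψ v) := by
  have hrestrict (φ : G.edgeSet → Fin k) :
      ∏ᶠ v ∈ U, f v (colorVec G φ v) =
        ∏ᶠ v ∈ U, f v (colorVecOn G U ((edgesTouching G U).domRestrict φ) v) :=
    finprod_mem_congr rfl fun v hv => by rw [colorVec_eq_colorVecOn G φ hv]
  simp only [hrestrict]
  rw [finsum_comp_domRestrict (edgesTouching G U) fun ψ => ∏ᶠ v ∈ U, f v (colorVecOn G U ψ v)]
  simp only [nsmul_eq_mul, Nat.card_eq_fintype_card, Fintype.card_fin, Nat.cast_pow]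

end

variable {V : Type} [Fintype V] [DecidableEq V]

theorem stmt10_general (k : ℕ) (G : SimpleGraph V)
    (h : V → (Fin k → ℕ) → ℂ) (z : ℂ) :
    tnc k G (fun v α => 1 + z * (h v α - 1)) =
      ∑ m ∈ Finset.range (Fintype.card V + 1),
        (∑ᶠ U ∈ {U : Set V | U.ncard = m},
            (k : ℂ) ^ (Nat.card ((edgesTouching G U)ᶜ : Set G.edgeSet)) *
              ∑ᶠ φ : edgesTouching G U → Fin k,
                ∏ᶠ v ∈ U, (h v (colorVecOn G U φ v) - 1)) * z ^ m := by
  set c : Set V → ℂ := fun U => (k : ℂ) ^ (Nat.card ((edgesTouching G U)ᶜ : Set G.edgeSet)) *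
    ∑ᶠ φ : edgesTouching G U → Fin k, ∏ᶠ v ∈ U, (h v (colorVecOn G U φ v) - 1)
  have := Fintype.ofFinite G.edgeSet
  calc tnc k G (fun v α => 1 + z * (h v α - 1))
      = ∑ T ∈ (Finset.univ : Finset V).powerset, z ^ T.card *
          ∑ᶠ φ : G.edgeSet → Fin k, ∏ᶠ v ∈ (T : Set V), (h v (colorVec G φ v) - 1) := by
        simp only [tnc, Finset.prod_one_add_mul, finsum_eq_sum_of_fintype, finprod_mem_coe_finset,
          Finset.mul_sum]
        exact Finset.sum_comm
    _ = ∑ T ∈ (Finset.univ : Finset V).powerset, z ^ T.card * c T := by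
        simp only [c, finsum_finprod_colorVec G _ fun v α => h v α - 1]
    _ = ∑ m ∈ Finset.range (Fintype.card V + 1),
          (∑ T ∈ Finset.powersetCard m (Finset.univ : Finset V), c T) * z ^ m := by
        rw [Finset.sum_powerset, Finset.card_univ]
        refine Finset.sum_congr rfl fun m _ => ?_
        rw [Finset.sum_mul]
        refine Finset.sum_congr rfl fun T hT => ?_
        rw [(Finset.mem_powersetCard.mp hT).2, mul_comm]
    _ = _ := by simp only [c, finsum_mem_ncard_eq]

/-- `q(z) = p(G)(I + z(h−I))` is a polynomial in `z` of degree at most `|V|`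
whose coefficient of `z^m` is
`Σ_{U ⊆ V, |U| = m} k^{|E∖E(U)|} Σ_{φ : E(U) → [k]} Π_{v ∈ U} (h^v(φ(δ(v))) − 1)`. -/
theorem stmt10 (k : ℕ) (hk : 2 ≤ k) (G : SimpleGraph V)
    (h : V → (Fin k → ℕ) → ℂ) (z : ℂ) :
    tnc k G (fun v α => 1 + z * (h v α - 1)) =
      ∑ m ∈ Finset.range (Fintype.card V + 1),
        (∑ᶠ U ∈ {U : Set V | U.ncard = m},
            (k : ℂ) ^ (Nat.card ((edgesTouching G U)ᶜ : Set G.edgeSet)) *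
              ∑ᶠ φ : edgesTouching G U → Fin k,
                ∏ᶠ v ∈ U, (h v (colorVecOn G U φ v) - 1)) * z ^ m :=
  stmt10_general k G h z
end

section
/- Let n, k ≥ 1, let B be a symmetric n×n complex matrix, let a ∈ ℂ^n, and let U be a k×n complex matrix with UᵀU = B. Then for every finite simple graph G: p(G)(a,B) = p(G)(h_{a,U}), where h_{a,U} : ℕ^k → ℂ is the k-color edge-coloring model defined by h_{a,U}(α) := Σ_{i=1}^n a_i · Π_{j=1}^k (U_{j,i})^{α_j}. -/
/-!
Expanding every vertex weight `h_{a,U}(φ(δ(v))) = Σ_i a_i Π_j U_{j,i}^{φ(δ(v))_j}` by a choice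
`ψ(v) = i` writes `p(G)(h_{a,U})` as a sum over pairs `(ψ, φ)` of `Π_v a_{ψ(v)}` times
`Π_{e = uw} U_{φ(e),ψ(u)} U_{φ(e),ψ(w)}`, because each edge is counted once at each of its two
endpoints. For fixed `ψ` the sum over `φ` factors over the edges, and
`Σ_c U_{c,ψ(u)} U_{c,ψ(w)} = (UᵀU)_{ψ(u),ψ(w)} = B_{ψ(u),ψ(w)}`.
-/

noncomputable section

variable {V : Type} [Fintype V] [DecidableEq V]

/-- Partition function of the vertex-coloring model `(a,B)` (with `B` symmetric):
`p(G)(a,B) = Σ_{φ : V → [n]} Π_{v∈V} a_{φ(v)} · Π_{uv ∈ E} B_{φ(u),φ(v)}`. -/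
def vcmPF {V : Type} [Fintype V] [DecidableEq V] {n : ℕ} (G : SimpleGraph V)
    (a : Fin n → ℂ) (B : Matrix (Fin n) (Fin n) ℂ) (hB : B.IsSymm) : ℂ :=
  ∑ᶠ φ : V → Fin n,
    (∏ v : V, a (φ v)) *
      ∏ᶠ e : G.edgeSet,
        Sym2.lift ⟨fun u w => B (φ u) (φ w), fun u w => (hB.apply (φ u) (φ w)).symm⟩
          (e : Sym2 V)

open Finset

theorem prod_filter_mem_sym2_eq_lift {M : Type*} [CommMonoid M] (f : V → M) {z : Sym2 V}
    (hz : ¬ z.IsDiag) :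
    ∏ v with v ∈ z, f v = Sym2.lift ⟨fun u w => f u * f w, fun _ _ => mul_comm _ _⟩ z := by
  induction z with
  | _ u w =>
    have huw : u ≠ w := by simpa using hz
    rw [show ({v | v ∈ s(u, w)} : Finset V) = {u, w} by ext; simp, prod_pair huw,
      Sym2.lift_mk]

theorem prod_prod_pow_colorVec {M : Type*} [CommMonoid M] {k : ℕ} (G : SimpleGraph V)
    [Fintype G.edgeSet] (φ : G.edgeSet → Fin k) (x : Fin k → V → M) :
    ∏ v, ∏ j, x j v ^ colorVec G φ v j =
      ∏ e : G.edgeSet, ∏ v with v ∈ (e : Sym2 V), x (φ e) v := by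
  have incident (v : V) :
      ∏ j, x j v ^ colorVec G φ v j =
        ∏ e ∈ univ.filter (fun e : G.edgeSet => v ∈ (e : Sym2 V)), x (φ e) v := by
    rw [← prod_fiberwise' _ φ (x · v)]
    refine prod_congr rfl fun j _ => ?_
    rw [prod_const, colorVec, Nat.card_eq_fintype_card, Fintype.card_subtype, filter_filter]
  simp_rw [incident]
  exact prod_comm' (by simp)

theorem sum_prod_filter_mem_sym2_eq_lift {ι κ R : Type*} [Fintype κ] [CommSemiring R]
    {B : Matrix ι ι R} (hB : B.IsSymm) {U : Matrix κ ι R} (hU : U.transpose * U = B)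
    (ψ : V → ι) {z : Sym2 V} (hz : ¬ z.IsDiag) :
    ∑ c, ∏ v with v ∈ z, U c (ψ v) =
      Sym2.lift ⟨fun u w => B (ψ u) (ψ w), fun u w => (hB.apply (ψ u) (ψ w)).symm⟩ z := by
  simp_rw [prod_filter_mem_sym2_eq_lift _ hz]
  induction z with
  | _ u w => simp [← hU, Matrix.mul_apply]

theorem stmt14_general (k n : ℕ)
    (B : Matrix (Fin n) (Fin n) ℂ) (hB : B.IsSymm) (a : Fin n → ℂ)
    (U : Matrix (Fin k) (Fin n) ℂ) (hU : U.transpose * U = B)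
    (V : Type) [Fintype V] [DecidableEq V] (G : SimpleGraph V) :
    vcmPF G a B hB =
      pf k G (fun α => ∑ i : Fin n, a i * ∏ j : Fin k, U j i ^ α j) := by
  classical
  let _ : Fintype G.edgeSet := Fintype.ofFinite _
  rw [vcmPF, pf, finsum_eq_sum_of_fintype, finsum_eq_sum_of_fintype]
  simp only [finprod_eq_prod_of_fintype]
  calc _ = ∑ ψ : V → Fin n, (∏ v, a (ψ v)) *
          ∏ e : G.edgeSet, ∑ c, ∏ v with v ∈ (e : Sym2 V), U c (ψ v) := by
        refine sum_congr rfl fun ψ _ => congrArg _ (prod_congr rfl fun e _ => ?_)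
        exact (sum_prod_filter_mem_sym2_eq_lift hB hU ψ (G.not_isDiag_of_mem_edgeSet e.2)).symm
    _ = ∑ ψ : V → Fin n, ∑ φ : G.edgeSet → Fin k,
          ∏ v, (a (ψ v) * ∏ j, U j (ψ v) ^ colorVec G φ v j) := by
        simp_rw [Fintype.prod_sum, mul_sum, prod_mul_distrib, prod_prod_pow_colorVec]
    _ = _ := by
        rw [sum_comm]
        simp_rw [Fintype.prod_sum]

/-- Szegedy: if `UᵀU = B` then the vertex-coloring model `(a,B)` and the
edge-coloring model `h_{a,U}(α) = Σ_i a_i Π_j U_{j,i}^{α_j}` have the same partition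
function on every simple graph. -/
theorem stmt14 (k n : ℕ) (hk : 2 ≤ k) (hn : 1 ≤ n)
    (B : Matrix (Fin n) (Fin n) ℂ) (hB : B.IsSymm) (a : Fin n → ℂ)
    (U : Matrix (Fin k) (Fin n) ℂ) (hU : U.transpose * U = B)
    (V : Type) [Fintype V] [DecidableEq V] (G : SimpleGraph V) :
    vcmPF G a B hB =
      pf k G (fun α => ∑ i : Fin n, a i * ∏ j : Fin k, U j i ^ α j) :=
  stmt14_general k n B hB a U hU V G
end
end
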